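/- arXiv:1903.11564 — 9 statements merged into one kernel-verified Lean document; each statement's English description precedes it below -/
import Mathlib

section
/- Let U be an open subset of ℝ^n and let k ≥ 1 and l ≥ k+1 be integers. Let f : U → ℝ be a function such that the function x ↦ |f(x)|^{1/l} (the real l-th root of the absolute value of f) is of class C^k on U. If g : U → ℝ is a continuous function such that |g(x)| = |f(x)| for all x ∈ U, then g is of class C^k on U. -/
/-!
Induction on `k`, for an arbitrary `C^k` function `h` with `|g| = |h| ^ l` and `k < l`
(here `h = |f| ^ (1/l)`). The quotient `g / h`, which is `0` where `h` vanishes, satisfies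
`|g / h| = |h| ^ (l - 1)`, so it is `C^(k-1)` by induction. Where `h ≠ 0`, the signs of `g`
and `h` are locally constant, so `g = ± (± h) ^ l` near the point; where `h = 0`,
`|g| ≤ |h| ^ l` is `O(‖y - x‖ ^ l)` with `l ≥ 2`. In both cases `g` is differentiable with
derivative `l • (g / h) • Dh`, which is `C^(k-1)`.
-/

open Filter Topology Asymptotics

section Topological

variable {X : Type*} [TopologicalSpace X]

lemma ContinuousAt.eventually_sign_eq {u : X → ℝ} {x : X} (hu : ContinuousAt u x)
    (hx : u x ≠ 0) :
    ∀ᶠ y in 𝓝 x, SignType.sign (u y) = SignType.sign (u x) :=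
  ((continuousAt_sign_of_ne_zero hx).comp hu).eventually_mem
    ((isOpen_discrete {SignType.sign (u x)}).mem_nhds rfl)

lemma abs_div_eq_abs_pow_pred {a b : ℝ} {l : ℕ} (hl : 2 ≤ l) (hab : |a| = |b| ^ l) :
    |a / b| = |b| ^ (l - 1) := by
  obtain ⟨m, rfl⟩ : ∃ m, l = m + 1 := ⟨l - 1, by omega⟩
  rcases eq_or_ne b 0 with rfl | hb
  · simp [zero_pow (show m ≠ 0 by omega)]
  · rw [abs_div, hab, pow_succ, mul_div_cancel_right₀ _ (abs_ne_zero.2 hb), Nat.add_sub_cancel]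

lemma continuousAt_div_of_abs_eq_abs_pow {g h : X → ℝ} {x : X} {l : ℕ} (hl : 2 ≤ l)
    (hg : ContinuousAt g x) (hh : ContinuousAt h x) (hgh : ∀ᶠ y in 𝓝 x, |g y| = |h y| ^ l) :
    ContinuousAt (fun y => g y / h y) x := by
  rcases eq_or_ne (h x) 0 with hx | hx
  · rw [ContinuousAt, hx, div_zero]
    refine squeeze_zero_norm' (hgh.mono fun y hy => (abs_div_eq_abs_pow_pred hl hy).le) ?_
    simpa [hx, zero_pow (show l - 1 ≠ 0 by omega)] using hh.tendsto.abs.pow (l - 1)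
  · exact hg.div hh hx

end Topological

variable {E : Type*} [NormedAddCommGroup E] [NormedSpace ℝ E]

lemma hasFDerivAt_zero_of_abs_le_abs_pow {g h : E → ℝ} {x : E} {l : ℕ} (hl : 2 ≤ l)
    (hh : DifferentiableAt ℝ h x) (hx : h x = 0) (hgh : ∀ᶠ y in 𝓝 x, |g y| ≤ |h y| ^ l) :
    HasFDerivAt g (0 : E →L[ℝ] ℝ) x := by
  have hgx : g x = 0 := by
    simpa [hx, zero_pow (show l ≠ 0 by omega)] using hgh.self_of_nhds
  have hg : g =O[𝓝 x] fun y => h y ^ l :=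
    .of_bound 1 <| hgh.mono fun y hy => by simpa [abs_pow] using hy
  have hh' : h =O[𝓝 x] fun y => y - x := by simpa [hx] using hh.isBigO_sub
  rw [hasFDerivAt_iff_isLittleO]
  simpa [hgx] using (hg.trans (hh'.norm_right.pow l)).trans_isLittleO (isLittleO_pow_sub_sub x hl)

lemma hasFDerivAt_of_abs_eq_abs_pow_of_ne_zero {g h : E → ℝ} {x : E} {l : ℕ}
    (hg : ContinuousAt g x) (hh : DifferentiableAt ℝ h x) (hx : h x ≠ 0)
    (hgh : ∀ᶠ y in 𝓝 x, |g y| = |h y| ^ l) :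
    HasFDerivAt g ((l * (g x / h x)) • fderiv ℝ h x) x := by
  have hgx : g x ≠ 0 := by
    rw [← abs_ne_zero, hgh.self_of_nhds]
    exact pow_ne_zero l (abs_ne_zero.2 hx)
  set c : ℝ := (SignType.sign (g x) : ℝ)
  set s : ℝ := (SignType.sign (h x) : ℝ)
  have hloc : g =ᶠ[𝓝 x] fun y => c * (s * h y) ^ l := by
    filter_upwards [hgh, hh.continuousAt.eventually_sign_eq hx, hg.eventually_sign_eq hgx]
      with y hy hhy hgy
    rw [← sign_mul_abs (g y), hy, ← sign_mul_self (h y), hhy, hgy]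
  have hderiv := (((hasDerivAt_pow l (s * h x)).comp_hasFDerivAt x
    (hh.hasFDerivAt.const_mul s)).const_mul c).congr_of_eventuallyEq hloc
  refine hderiv.congr_fderiv ?_
  rw [smul_smul, smul_smul, hloc.self_of_nhds]
  congr 1
  obtain _ | m := l
  · simp
  · simp only [Nat.add_sub_cancel]
    field_simp
    ring

lemma hasFDerivAt_of_abs_eq_abs_pow {g h : E → ℝ} {x : E} {l : ℕ} (hl : 2 ≤ l)
    (hg : ContinuousAt g x) (hh : DifferentiableAt ℝ h x)
    (hgh : ∀ᶠ y in 𝓝 x, |g y| = |h y| ^ l) :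
    HasFDerivAt g ((l * (g x / h x)) • fderiv ℝ h x) x := by
  rcases eq_or_ne (h x) 0 with hx | hx
  · simpa [hx] using hasFDerivAt_zero_of_abs_le_abs_pow hl hh hx (hgh.mono fun y hy => hy.le)
  · exact hasFDerivAt_of_abs_eq_abs_pow_of_ne_zero hg hh hx hgh

theorem contDiffOn_of_abs_eq_abs_pow {U : Set E} (hU : IsOpen U) {k l : ℕ} (hkl : k < l)
    {g h : E → ℝ} (hh : ContDiffOn ℝ k h U) (hg : ContinuousOn g U)
    (hgh : ∀ x ∈ U, |g x| = |h x| ^ l) : ContDiffOn ℝ k g U := by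
  induction k generalizing g l with
  | zero => exact contDiffOn_zero.2 hg
  | succ k ih =>
    have hl : 2 ≤ l := by omega
    have hgh' : ∀ x ∈ U, ∀ᶠ y in 𝓝 x, |g y| = |h y| ^ l := fun x hx =>
      eventually_of_mem (hU.mem_nhds hx) hgh
    have hdiff : DifferentiableOn ℝ h U := hh.differentiableOn (by simp)
    have hquot : ContDiffOn ℝ k (fun y => g y / h y) U := by
      refine ih (l := l - 1) (by omega) hh.of_succ ?_ fun x hx =>
        abs_div_eq_abs_pow_pred hl (hgh x hx)
      exact fun x hx => (continuousAt_div_of_abs_eq_abs_pow hl (hg.continuousAt (hU.mem_nhds hx))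
        (hdiff.differentiableAt (hU.mem_nhds hx)).continuousAt (hgh' x hx)).continuousWithinAt
    have hderiv : ∀ x ∈ U, HasFDerivAt g ((l * (g x / h x)) • fderiv ℝ h x) x := fun x hx =>
      hasFDerivAt_of_abs_eq_abs_pow hl (hg.continuousAt (hU.mem_nhds hx))
        (hdiff.differentiableAt (hU.mem_nhds hx)) (hgh' x hx)
    rw [Nat.cast_succ, contDiffOn_succ_iff_fderiv_of_isOpen hU]
    refine ⟨fun x hx => (hderiv x hx).differentiableAt.differentiableWithinAt, by simp, ?_⟩
    exact ((contDiffOn_const.mul hquot).smul (hh.fderiv_of_isOpen hU le_rfl)).congr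
      fun x hx => (hderiv x hx).fderiv

theorem stmt0_general (n k l : ℕ) (hl : k + 1 ≤ l)
    (U : Set (Fin n → ℝ)) (hU : IsOpen U)
    (f g : (Fin n → ℝ) → ℝ)
    (hf : ContDiffOn ℝ k (fun x => |f x| ^ ((1 : ℝ) / (l : ℝ))) U)
    (hg : ContinuousOn g U)
    (hfg : ∀ x ∈ U, |g x| = |f x|) :
    ContDiffOn ℝ k g U := by
  refine contDiffOn_of_abs_eq_abs_pow hU hl hf hg fun x hx => ?_
  have hl0 : (l : ℝ) ≠ 0 := by norm_cast; omega
  rw [hfg x hx, abs_of_nonneg (Real.rpow_nonneg (abs_nonneg (f x)) _), ← Real.rpow_natCast,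
    ← Real.rpow_mul (abs_nonneg _), one_div_mul_cancel hl0, Real.rpow_one]

/-- Let `U ⊆ ℝⁿ` be open, `k ≥ 1`, `l ≥ k + 1`. If `f : U → ℝ` is such
that `x ↦ |f x| ^ (1/l)` is of class `C^k` on `U`, and `g` is continuous on `U` with
`|g| = |f|` on `U`, then `g` is of class `C^k` on `U`. -/
theorem stmt0 (n k l : ℕ) (hk : 1 ≤ k) (hl : k + 1 ≤ l)
    (U : Set (Fin n → ℝ)) (hU : IsOpen U)
    (f g : (Fin n → ℝ) → ℝ)
    (hf : ContDiffOn ℝ k (fun x => |f x| ^ ((1 : ℝ) / (l : ℝ))) U)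
    (hg : ContinuousOn g U)
    (hfg : ∀ x ∈ U, |g x| = |f x|) :
    ContDiffOn ℝ k g U :=
  stmt0_general n k l hl U hU f g hf hg hfg
end

section
/- Let n, p, l be nonnegative integers, U ⊆ ℝ^n an open set, and L ⊆ U a nonempty compact set. Then: (i) the set of restrictions to L of maps in C^l(U,ℝ^p) equals the set of restrictions to L of maps in C^l(ℝ^n,ℝ^p); and (ii) on this common set C^l(L,ℝ^p), the quotient topology coinduced by the restriction map ρ_U : C^l(U,ℝ^p) → C^l(L,ℝ^p) coincides with the quotient topology coinduced by the restriction map ρ_{ℝ^n} : C^l(ℝ^n,ℝ^p) → C^l(L,ℝ^p). -/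
open scoped Topology

/-- Partial derivative of `f` in the `i`-th coordinate direction. -/
noncomputable def pd {n : ℕ} (i : Fin n) (f : (Fin n → ℝ) → ℝ) : (Fin n → ℝ) → ℝ :=
  fun x => fderiv ℝ f x (Pi.single i 1)

/-- The partial derivative `∂^|α| f / ∂x^α` associated with a multi-index `α`. -/
noncomputable def mpd {n : ℕ} (α : Fin n → ℕ) (f : (Fin n → ℝ) → ℝ) : (Fin n → ℝ) → ℝ :=
  (List.finRange n).foldr (fun i g => (pd i)^[α i] g) f

/-- The multi-indices `α = (α₁,…,αₙ)` with `|α| = α₁ + … + αₙ ≤ l`. -/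
def multiIdx (n l : ℕ) : Finset (Fin n → ℕ) :=
  (Fintype.piFinset fun _ : Fin n => Finset.range (l + 1)).filter fun α => ∑ i, α i ≤ l

/-- The seminorm `‖φ‖ = Σ_j Σ_{|α|≤l} sup_{x∈L} |∂^α φ_j (x)|`. -/
noncomputable def semN {n p : ℕ} (L : Set (Fin n → ℝ)) (l : ℕ)
    (φ : (Fin n → ℝ) → (Fin p → ℝ)) : ℝ :=
  ∑ j : Fin p, ∑ α ∈ multiIdx n l,
    sSup ((fun x => |mpd α (fun y => φ y j) x|) '' L)

/-- The space `C^l(U, ℝ^p)` of maps of class `C^l` on `U`. -/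
def ClSpace (n p l : ℕ) (U : Set (Fin n → ℝ)) : Type :=
  {φ : (Fin n → ℝ) → (Fin p → ℝ) // ContDiffOn ℝ l φ U}

/-- The `ε`-ball around `φ` for the seminorm `semN L l`. -/
noncomputable def semBall {n p l : ℕ} {U : Set (Fin n → ℝ)} (L : Set (Fin n → ℝ))
    (φ : ClSpace n p l U) (ε : ℝ) : Set (ClSpace n p l U) :=
  {ψ | semN L l (fun x => ψ.1 x - φ.1 x) < ε}

/-- The topology on `C^l(U, ℝ^p)` induced by the seminorm `semN L l`
(the seminorm balls form a basis). -/
noncomputable def seminormTop (n p l : ℕ) (U L : Set (Fin n → ℝ)) :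
    TopologicalSpace (ClSpace n p l U) :=
  TopologicalSpace.generateFrom {S | ∃ φ ε, 0 < ε ∧ S = semBall L φ ε}

/-- The restriction map `ρ_U : C^l(U,ℝ^p) → (L → ℝ^p)`, `φ ↦ φ|_L`. -/
def restrictMap (n p l : ℕ) (U L : Set (Fin n → ℝ)) (φ : ClSpace n p l U) :
    (L → (Fin p → ℝ)) :=
  fun x => φ.1 x

/-!
A smooth cutoff `χ` that equals `1` near `L` and `0` near `ℝⁿ \ U` turns every `C^l` map `ψ` on
`U` into the `C^l` map `χ • ψ` on `ℝⁿ` with the same germ along `L`, while restriction to `U` goes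
the other way. Partial derivatives are local operators, so the seminorm only sees germs along `L`;
hence both maps pull seminorm balls back to seminorm balls, are continuous, and commute with the
restrictions to `L`. Maps in both directions with these properties force equal images and equal
quotient topologies.
-/

open Filter Set
open scoped ContDiff Manifold

theorem TopologicalSpace.coinduced_eq_of_continuous {X Y Z : Type*}
    {tX : TopologicalSpace X} {tY : TopologicalSpace Y} {f : X → Z} {g : Y → Z}
    {e : X → Y} {r : Y → X} (he : Continuous[tX, tY] e) (hr : Continuous[tY, tX] r)
    (hge : g ∘ e = f) (hfr : f ∘ r = g) : tX.coinduced f = tY.coinduced g := by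
  apply le_antisymm
  · rw [← hge, ← coinduced_compose]
    exact coinduced_mono (continuous_iff_coinduced_le.1 he)
  · rw [← hfr, ← coinduced_compose]
    exact coinduced_mono (continuous_iff_coinduced_le.1 hr)

theorem exists_contDiff_cutoff {E : Type*} [NormedAddCommGroup E] [NormedSpace ℝ E]
    [FiniteDimensional ℝ E] {U L : Set E} (hU : IsOpen U) (hL : IsClosed L) (hLU : L ⊆ U) :
    ∃ χ : E → ℝ, ContDiff ℝ ∞ χ ∧ (∀ᶠ x in 𝓝ˢ Uᶜ, χ x = 0) ∧ ∀ᶠ x in 𝓝ˢ L, χ x = 1 := by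
  obtain ⟨χ, hχU, hχL, -⟩ := exists_contMDiffMap_zero_one_nhds_of_isClosed 𝓘(ℝ, E)
    (n := (⊤ : ℕ∞)) hU.isClosed_compl hL (disjoint_compl_left_iff_subset.2 hLU)
  exact ⟨χ, χ.contMDiff.contDiff, hχU, hχL⟩

theorem ContDiffOn.contDiff_smul_of_eventually_zero {E F : Type*} [NormedAddCommGroup E]
    [NormedSpace ℝ E] [NormedAddCommGroup F] [NormedSpace ℝ F] {U : Set E} {k : WithTop ℕ∞}
    {χ : E → ℝ} {f : E → F} (hf : ContDiffOn ℝ k f U) (hU : IsOpen U) (hχ : ContDiff ℝ k χ)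
    (hχU : ∀ᶠ x in 𝓝ˢ Uᶜ, χ x = 0) : ContDiff ℝ k fun x => χ x • f x := by
  refine contDiff_iff_contDiffAt.2 fun x => ?_
  by_cases hx : x ∈ U
  · exact hχ.contDiffAt.smul (hf.contDiffAt (hU.mem_nhds hx))
  · have hzero : (fun x => χ x • f x) =ᶠ[𝓝 x] fun _ => 0 :=
      (hχU.filter_mono (nhds_le_nhdsSet hx)).mono fun y hy => by simp [hy]
    exact contDiffAt_const.congr_of_eventuallyEq hzero

variable {n p l : ℕ}

theorem eventuallyEq_pd {f g : (Fin n → ℝ) → ℝ} {x : Fin n → ℝ} (h : f =ᶠ[𝓝 x] g)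
    (i : Fin n) : pd i f =ᶠ[𝓝 x] pd i g :=
  (h.fderiv (𝕜 := ℝ)).mono fun y hy => by simp only [pd, hy]

theorem eventuallyEq_iterate_pd {f g : (Fin n → ℝ) → ℝ} {x : Fin n → ℝ} (h : f =ᶠ[𝓝 x] g)
    (i : Fin n) (k : ℕ) : (pd i)^[k] f =ᶠ[𝓝 x] (pd i)^[k] g := by
  induction k with
  | zero => exact h
  | succ k ih => simpa only [Function.iterate_succ_apply'] using eventuallyEq_pd ih i

theorem eventuallyEq_mpd {f g : (Fin n → ℝ) → ℝ} {x : Fin n → ℝ} (h : f =ᶠ[𝓝 x] g)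
    (α : Fin n → ℕ) : mpd α f =ᶠ[𝓝 x] mpd α g := by
  unfold mpd
  induction List.finRange n with
  | nil => exact h
  | cons i s ih => exact eventuallyEq_iterate_pd ih i (α i)

theorem semN_congr {L : Set (Fin n → ℝ)} {φ ψ : (Fin n → ℝ) → Fin p → ℝ}
    (h : φ =ᶠ[𝓝ˢ L] ψ) (l : ℕ) : semN L l φ = semN L l ψ := by
  unfold semN
  refine Finset.sum_congr rfl fun j _ => Finset.sum_congr rfl fun α _ => ?_
  refine congrArg sSup (image_congr fun x hx => ?_)
  have hx : (fun y => φ y j) =ᶠ[𝓝 x] fun y => ψ y j :=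
    (h.filter_mono (nhds_le_nhdsSet hx)).fun_comp (· j)
  rw [(eventuallyEq_mpd hx α).eq_of_nhds]

namespace ClSpace

variable {U U' L : Set (Fin n → ℝ)}

theorem continuous_of_eventuallyEq (F : ClSpace n p l U → ClSpace n p l U')
    (G : ClSpace n p l U' → ClSpace n p l U) (hF : ∀ ψ, (F ψ).1 =ᶠ[𝓝ˢ L] ψ.1)
    (hG : ∀ ψ, (G ψ).1 =ᶠ[𝓝ˢ L] ψ.1) :
    Continuous[seminormTop n p l U L, seminormTop n p l U' L] F := by
  refine continuous_generateFrom_iff.2 ?_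
  rintro _ ⟨b, ε, hε, rfl⟩
  have hball : F ⁻¹' semBall L b ε = semBall L (G b) ε := by
    ext ψ
    have hsub : (fun x => (F ψ).1 x - b.1 x) =ᶠ[𝓝ˢ L] fun x => ψ.1 x - (G b).1 x :=
      (hF ψ).sub (hG b).symm
    simp only [mem_preimage, semBall, mem_ofPred_eq, semN_congr hsub]
  rw [hball]
  exact TopologicalSpace.GenerateOpen.basic _ ⟨G b, ε, hε, rfl⟩

def restrict (U : Set (Fin n → ℝ)) (ψ : ClSpace n p l univ) : ClSpace n p l U :=
  ⟨ψ.1, ψ.2.mono (subset_univ U)⟩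

def cutoffExtend (hU : IsOpen U) {χ : (Fin n → ℝ) → ℝ} (hχ : ContDiff ℝ l χ)
    (hχU : ∀ᶠ x in 𝓝ˢ Uᶜ, χ x = 0) (ψ : ClSpace n p l U) : ClSpace n p l univ :=
  ⟨fun x => χ x • ψ.1 x, (ψ.2.contDiff_smul_of_eventually_zero hU hχ hχU).contDiffOn⟩

theorem cutoffExtend_eventuallyEq (hU : IsOpen U) {χ : (Fin n → ℝ) → ℝ} (hχ : ContDiff ℝ l χ)
    (hχU : ∀ᶠ x in 𝓝ˢ Uᶜ, χ x = 0) (hχL : ∀ᶠ x in 𝓝ˢ L, χ x = 1) (ψ : ClSpace n p l U) :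
    (cutoffExtend hU hχ hχU ψ).1 =ᶠ[𝓝ˢ L] ψ.1 :=
  hχL.mono fun x hx => by simp [cutoffExtend, hx]

end ClSpace

open ClSpace in
theorem stmt3_general (n p l : ℕ) (U L : Set (Fin n → ℝ)) (hU : IsOpen U) (hL : IsCompact L)
    (hLU : L ⊆ U) :
    Set.range (restrictMap n p l U L) = Set.range (restrictMap n p l Set.univ L) ∧
      TopologicalSpace.coinduced (restrictMap n p l U L) (seminormTop n p l U L) =
        TopologicalSpace.coinduced (restrictMap n p l Set.univ L)
          (seminormTop n p l Set.univ L) := by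
  obtain ⟨χ, hχ, hχU, hχL⟩ := exists_contDiff_cutoff hU hL.isClosed hLU
  have hχl : ContDiff ℝ l χ := hχ.of_le (mod_cast le_top)
  let E := cutoffExtend (p := p) hU hχl hχU
  have hE : ∀ ψ, (E ψ).1 =ᶠ[𝓝ˢ L] ψ.1 := cutoffExtend_eventuallyEq hU hχl hχU hχL
  have hR : ∀ ψ, (restrict (p := p) (l := l) U ψ).1 =ᶠ[𝓝ˢ L] ψ.1 := fun _ => EventuallyEq.rfl
  have hρE : restrictMap n p l univ L ∘ E = restrictMap n p l U L :=
    funext fun ψ => funext fun x => (hE ψ).self_of_nhdsSet x.2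
  have hρR : restrictMap n p l U L ∘ restrict U = restrictMap n p l univ L := rfl
  refine ⟨?_, TopologicalSpace.coinduced_eq_of_continuous (continuous_of_eventuallyEq E _ hE hR)
    (continuous_of_eventuallyEq _ E hR hE) hρE hρR⟩
  exact (hρE ▸ range_comp_subset_range _ _).antisymm (hρR ▸ range_comp_subset_range _ _)

/-- (i) The set of restrictions to `L` of `C^l` maps on `U` equals the set of
restrictions to `L` of `C^l` maps on `ℝⁿ`; (ii) on the common set `C^l(L,ℝ^p)`, the quotient
topology coinduced by `ρ_U` from the seminorm topology on `C^l(U,ℝ^p)` coincides with the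
quotient topology coinduced by `ρ_{ℝⁿ}` from the seminorm topology on `C^l(ℝⁿ,ℝ^p)`. -/
theorem stmt3 (n p l : ℕ) (U L : Set (Fin n → ℝ)) (hU : IsOpen U) (hL : IsCompact L)
    (hne : L.Nonempty) (hLU : L ⊆ U) :
    Set.range (restrictMap n p l U L) = Set.range (restrictMap n p l Set.univ L) ∧
      TopologicalSpace.coinduced (restrictMap n p l U L) (seminormTop n p l U L) =
        TopologicalSpace.coinduced (restrictMap n p l Set.univ L)
          (seminormTop n p l Set.univ L) :=
  stmt3_general n p l U L hU hL hLU
end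

section
/- Let L ⊆ ℝ^n be a nonempty compact set and p a positive integer. The restriction map ρ : C(ℝ^n,ℝ^p) → C(L,ℝ^p), f ↦ f|_L, between the spaces of continuous maps endowed with the compact-open topologies, is surjective and open; consequently, the compact-open topology on C(L,ℝ^p) coincides with the quotient topology coinduced by ρ from the compact-open topology on C(ℝ^n,ℝ^p). -/
/-!
Surjectivity is the Tietze extension theorem for the finite-dimensional target. For openness, a
compact-open neighbourhood of `f` contains every `f + e` with `e` uniformly small on all of `ℝⁿ`;
given `h` uniformly close to `f|_L` (on the compact set `L` the compact-open topology is the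
uniform one), a norm-preserving Tietze extension `e` of `h - f|_L` gives such an `f + e` with
`(f + e)|_L = h`. A continuous open surjection is a quotient map.
-/

open Filter Metric

namespace ContinuousMap

variable {X E : Type*} [TopologicalSpace X] [NormalSpace X]
  [NormedAddCommGroup E] [NormedSpace ℝ E] [FiniteDimensional ℝ E] {L : Set X}

theorem exists_restrict_eq_forall_norm_le (hL : IsClosed L) [CompactSpace L] (g : C(L, E)) :
    ∃ e : C(X, E), e.restrict L = g ∧ ∀ x, ‖e x‖ ≤ ‖g‖ := by
  obtain ⟨e, he_norm, he⟩ :=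
    BoundedContinuousFunction.exists_norm_eq_domRestrict_eq hL ℝ (.mkOfCompact g)
  refine ⟨e.toContinuousMap, ?_, fun x => ?_⟩
  · ext x
    exact congr($he x)
  · rw [← BoundedContinuousFunction.norm_mkOfCompact, ← he_norm]
    exact e.norm_coe_le_norm x

theorem isOpenMap_restrict (hL : IsClosed L) [CompactSpace L] :
    IsOpenMap (fun f : C(X, E) => f.restrict L) := by
  refine IsOpenMap.of_nhds_le fun f U hU => ?_
  obtain ⟨⟨K, ε⟩, ⟨-, hε⟩, hKε⟩ :=
    (nhds_basis_uniformity' uniformity_basis_dist.compactConvergenceUniformity).mem_iff.mp hU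
  refine mem_of_superset (ball_mem_nhds _ hε) fun h hh => ?_
  obtain ⟨e, he, he_le⟩ := exists_restrict_eq_forall_norm_le hL (h - f.restrict L)
  have hfe : (f + e).restrict L = h := by
    change f.restrict L + e.restrict L = h
    rw [he, add_sub_cancel]
  refine hfe ▸ hKε fun x _ => ?_
  calc dist (f x) ((f + e) x) = ‖e x‖ := by simp [dist_eq_norm]
    _ ≤ ‖h - f.restrict L‖ := he_le x
    _ < ε := by rwa [← dist_eq_norm]

end ContinuousMap

theorem stmt4_general (n p : ℕ) (L : Set (Fin n → ℝ)) (hL : IsCompact L) :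
    Function.Surjective
        (fun f : C((Fin n → ℝ), (Fin p → ℝ)) => f.restrict L) ∧
      IsOpenMap (fun f : C((Fin n → ℝ), (Fin p → ℝ)) => f.restrict L) ∧
      (inferInstance : TopologicalSpace C(↥L, Fin p → ℝ)) =
        TopologicalSpace.coinduced
          (fun f : C((Fin n → ℝ), (Fin p → ℝ)) => f.restrict L) inferInstance := by
  have : CompactSpace L := isCompact_iff_compactSpace.mp hL
  have hsurj : Function.Surjective fun f : C(Fin n → ℝ, Fin p → ℝ) => f.restrict L :=
    fun g => ContinuousMap.exists_restrict_eq hL.isClosed g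
  have hopen := ContinuousMap.isOpenMap_restrict (E := Fin p → ℝ) hL.isClosed
  exact ⟨hsurj, hopen,
    (hopen.isQuotientMap (ContinuousMap.continuous_restrict L) hsurj).eq_coinduced⟩

/-- For a nonempty compact `L ⊆ ℝⁿ` and `p ≥ 1`, the restriction map
`ρ : C(ℝⁿ,ℝ^p) → C(L,ℝ^p)` between the spaces of continuous maps with the compact-open
topologies is surjective and open; consequently the compact-open topology on `C(L,ℝ^p)`
coincides with the quotient topology coinduced by `ρ`. -/
theorem stmt4 (n p : ℕ) (hp : 0 < p) (L : Set (Fin n → ℝ)) (hL : IsCompact L)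
    (hne : L.Nonempty) :
    Function.Surjective
        (fun f : C((Fin n → ℝ), (Fin p → ℝ)) => f.restrict L) ∧
      IsOpenMap (fun f : C((Fin n → ℝ), (Fin p → ℝ)) => f.restrict L) ∧
      (inferInstance : TopologicalSpace C(↥L, Fin p → ℝ)) =
        TopologicalSpace.coinduced
          (fun f : C((Fin n → ℝ), (Fin p → ℝ)) => f.restrict L) inferInstance :=
  stmt4_general n p L hL
end

section
/- Let K be a nonempty compact subset of ℝ^n and let U be a bounded open neighborhood of K in ℝ^n. Then there exist a real polynomial function P : ℝ^n → ℝ with P(x) ≥ 0 for all x ∈ ℝ^n and real numbers 0 < ε₁ < ε₂ such that: P(x) < ε₁ for all x ∈ K; P(x) > ε₂ for all x in the frontier of U; and the gradient of P is nonzero at every point x ∈ ℝ^n with P(x) = ε₁ or P(x) = ε₂ (that is, 0 is a regular value of both P − ε₁ and P − ε₂). -/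
/-!
Let `δ > 0` be such that the `δ`-thickening of `K` lies in `U`, and approximate `x ↦ infDist x K`
within `δ / 8` on the compact set `closure U` by a polynomial `Q` (Stone–Weierstrass). By Sard's
theorem for the gradient map `∇Q : ℝⁿ → ℝⁿ`, some small `w` is a regular value of `∇Q`; the
critical points of `R = Q - ⟪w, ·⟫` form `(∇Q)⁻¹ {w}`, which is discrete and hence countable.
Then `|R| < δ / 4` on `K` and `R > 3δ / 4` on the frontier of `U`. Take `P = R²`: as
`∇(R²) = 2R ∇R`, every level `ε > 0` avoiding the countably many values of `R²` at critical
points of `R` is a regular value of `P`.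
-/

open Set Filter

namespace MvPolynomial

variable {σ R : Type*}

section Algebra

variable [CommSemiring R]

noncomputable def gradient (p : MvPolynomial σ R) (x : σ → R) : σ → R :=
  fun i => eval x (pderiv i p)

noncomputable def hessian (p : MvPolynomial σ R) (x : σ → R) : Matrix σ σ R :=
  Matrix.of fun i j => gradient (pderiv i p) x j

theorem gradient_mul (p q : MvPolynomial σ R) (x : σ → R) :
    gradient (p * q) x = eval x p • gradient q x + eval x q • gradient p x := by
  ext i
  simp [gradient, Derivation.leibniz]

variable [Fintype σ]

theorem gradient_add_sum_C_mul_X (p : MvPolynomial σ R) (v x : σ → R) :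
    gradient (p + ∑ i, C (v i) * X i) x = gradient p x + v := by
  classical
  ext j
  simp [gradient, pderiv_X, Pi.single_apply]

theorem hessian_add_sum_C_mul_X (p : MvPolynomial σ R) (v x : σ → R) :
    hessian (p + ∑ i, C (v i) * X i) x = hessian p x := by
  classical
  ext j k
  simp [hessian, gradient, pderiv_X, Pi.single_apply]

end Algebra

section Calculus

variable {𝕜 : Type*} [NontriviallyNormedField 𝕜] [Fintype σ]

theorem hasFDerivAt_eval (p : MvPolynomial σ 𝕜) (x : σ → 𝕜) :
    HasFDerivAt (fun y => eval y p)
      (∑ i, gradient p x i • (ContinuousLinearMap.proj i : (σ → 𝕜) →L[𝕜] 𝕜)) x := by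
  classical
  induction p using MvPolynomial.induction_on with
  | C a =>
    simp only [eval_C]
    exact (hasFDerivAt_const a x).congr_fderiv
      (ContinuousLinearMap.ext fun v => by simp [gradient])
  | add p q hp hq =>
    simp only [map_add]
    exact (hp.add hq).congr_fderiv
      (ContinuousLinearMap.ext fun v => by simp [gradient, add_mul, Finset.sum_add_distrib])
  | mul_X p i hp =>
    simp only [map_mul, eval_X]
    refine (hp.mul (hasFDerivAt_apply i x)).congr_fderiv (ContinuousLinearMap.ext fun v => ?_)
    simp [gradient, Pi.single_apply, apply_ite (eval x), add_mul, Finset.sum_add_distrib,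
      Finset.mul_sum, mul_assoc]

theorem fderiv_eval_eq_zero_iff (p : MvPolynomial σ 𝕜) (x : σ → 𝕜) :
    fderiv 𝕜 (fun y => eval y p) x = 0 ↔ gradient p x = 0 := by
  classical
  rw [(hasFDerivAt_eval p x).fderiv]
  refine ⟨fun h => _root_.funext fun i => ?_, fun h => ContinuousLinearMap.ext fun v => by simp [h]⟩
  simpa [Pi.single_apply] using congr($h (Pi.single i 1))

theorem hasFDerivAt_gradient [CompleteSpace 𝕜] [DecidableEq σ] (p : MvPolynomial σ 𝕜)
    (x : σ → 𝕜) :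
    HasFDerivAt (gradient p) (LinearMap.toContinuousLinearMap (Matrix.toLin' (hessian p x))) x :=
  (hasFDerivAt_pi.mpr fun i => hasFDerivAt_eval (pderiv i p) x).congr_fderiv <|
    ContinuousLinearMap.ext fun v => _root_.funext fun i => by
      simp [Matrix.mulVec, dotProduct, hessian, mul_comm]

end Calculus

section Real

variable [Fintype σ]

theorem countable_gradient_preimage_of_det_hessian_ne_zero [DecidableEq σ]
    {p : MvPolynomial σ ℝ} {c : σ → ℝ} (h : ∀ x ∈ gradient p ⁻¹' {c}, (hessian p x).det ≠ 0) :
    (gradient p ⁻¹' {c}).Countable := by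
  refine (HereditarilyLindelofSpace.isLindelof _).countable_of_isDiscrete ?_
  refine isDiscrete_iff_nhdsNE.mpr fun x hx => inf_principal_eq_bot.mpr ?_
  have hker : LinearMap.ker (Matrix.toLin' (hessian p x)) = ⊥ :=
    LinearMap.ker_eq_bot.mpr <| Matrix.mulVec_injective_iff_isUnit.mpr <|
      (Matrix.isUnit_iff_isUnit_det _).mpr (isUnit_iff_ne_zero.mpr (h x hx))
  obtain ⟨C, -, hC⟩ := (Matrix.toLin' (hessian p x)).exists_antilipschitzWith hker
  exact (hasFDerivAt_gradient p x).eventually_ne ⟨C, hC⟩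

theorem volume_gradient_image_setOf_det_hessian_eq_zero [DecidableEq σ] (p : MvPolynomial σ ℝ) :
    MeasureTheory.volume (gradient p '' {x | (hessian p x).det = 0}) = 0 :=
  MeasureTheory.addHaar_image_eq_zero_of_det_fderivWithin_eq_zero _
    (fun x _ => (hasFDerivAt_gradient p x).hasFDerivWithinAt)
    (fun x hx => by rwa [LinearMap.det_toContinuousLinearMap, LinearMap.det_toLin'])

theorem exists_near_countable_setOf_gradient_eq_zero [DecidableEq σ] (p : MvPolynomial σ ℝ)
    {s : Set (σ → ℝ)} (hs : Bornology.IsBounded s) {ε : ℝ} (hε : 0 < ε) :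
    ∃ q : MvPolynomial σ ℝ, (∀ x ∈ s, |eval x q - eval x p| < ε) ∧
      {x | gradient q x = 0}.Countable := by
  obtain ⟨r, hr, hsr⟩ := hs.exists_pos_norm_le
  set η := ε / ((Fintype.card σ + 1) * r)
  have hη : 0 < η := by positivity
  obtain ⟨w, hw, hw_reg⟩ : ∃ w ∈ Metric.ball (0 : σ → ℝ) η,
      w ∉ gradient p '' {x | (hessian p x).det = 0} :=
    not_subset.mp fun h => (Metric.measure_ball_pos MeasureTheory.volume 0 hη).ne'
      (MeasureTheory.measure_mono_null h (volume_gradient_image_setOf_det_hessian_eq_zero p))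
  rw [mem_ball_zero_iff] at hw
  refine ⟨p + ∑ i, C (-w i) * X i, fun x hx => ?_,
    countable_gradient_preimage_of_det_hessian_ne_zero fun x hx => ?_⟩
  · have hwx : ∀ i, |w i * x i| ≤ η * r := fun i => by
      rw [abs_mul]
      exact mul_le_mul ((norm_le_pi_norm w i).trans hw.le) ((norm_le_pi_norm x i).trans (hsr x hx))
        (abs_nonneg _) hη.le
    calc |eval x (p + ∑ i, C (-w i) * X i) - eval x p| = |∑ i, w i * x i| := by simp
      _ ≤ ∑ i : σ, η * r :=
        (Finset.abs_sum_le_sum_abs _ _).trans (Finset.sum_le_sum fun i _ => hwx i)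
      _ = Fintype.card σ / (Fintype.card σ + 1) * ε := by
        simp only [Finset.sum_const, Finset.card_univ, nsmul_eq_mul, η]
        field_simp
      _ < ε := mul_lt_of_lt_one_left hε ((div_lt_one (by positivity)).mpr (lt_add_one _))
  · rw [hessian_add_sum_C_mul_X]
    refine fun hdet => hw_reg ⟨x, hdet, ?_⟩
    rw [mem_preimage, mem_singleton_iff, gradient_add_sum_C_mul_X] at hx
    exact add_neg_eq_zero.mp hx

theorem exists_regular_values_mul_self {p : MvPolynomial σ ℝ}
    (hp : {x | gradient p x = 0}.Countable) {a b : ℝ} (ha : 0 ≤ a) (hab : a < b) :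
    ∃ ε₁ ε₂, a < ε₁ ∧ ε₁ < ε₂ ∧ ε₂ < b ∧ ∀ x, eval x (p * p) = ε₁ ∨ eval x (p * p) = ε₂ →
      fderiv ℝ (fun y => eval y (p * p)) x ≠ 0 := by
  have hdense := (hp.image fun x => eval x (p * p)).dense_compl ℝ
  obtain ⟨ε₁, hε₁, ha₁, h₁b⟩ := hdense.exists_between hab
  obtain ⟨ε₂, hε₂, h₁₂, h₂b⟩ := hdense.exists_between h₁b
  refine ⟨ε₁, ε₂, ha₁, h₁₂, h₂b, fun x hx hcrit => ?_⟩
  have hpx : eval x p ≠ 0 := by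
    rintro h
    rcases hx with hx | hx <;> simp [h] at hx <;> linarith
  have hgrad : gradient p x = 0 := by
    rw [fderiv_eval_eq_zero_iff, gradient_mul, ← add_smul] at hcrit
    exact (smul_eq_zero.mp hcrit).resolve_left (by simpa using hpx)
  rcases hx with hx | hx
  · exact hε₁ ⟨x, hgrad, hx⟩
  · exact hε₂ ⟨x, hgrad, hx⟩

end Real

end MvPolynomial

open MvPolynomial in
theorem exists_mvPolynomial_near_of_continuousOn {σ : Type*} {s : Set (σ → ℝ)} (hs : IsCompact s)
    {f : (σ → ℝ) → ℝ} (hf : ContinuousOn f s) {ε : ℝ} (hε : 0 < ε) :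
    ∃ p : MvPolynomial σ ℝ, ∀ x ∈ s, |eval x p - f x| < ε := by
  have := isCompact_iff_compactSpace.mp hs
  let φ : MvPolynomial σ ℝ →ₐ[ℝ] C(s, ℝ) := aeval fun i =>
    ⟨fun x => (x : σ → ℝ) i, (continuous_apply i).comp continuous_subtype_val⟩
  have hφ : ∀ p (x : s), φ p x = eval (x : σ → ℝ) p := fun p x => by
    induction p using MvPolynomial.induction_on <;> simp_all [φ]
  have hsep : φ.range.SeparatesPoints := fun x y hxy => by
    obtain ⟨i, hi⟩ := Function.ne_iff.mp (Subtype.coe_injective.ne hxy)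
    exact ⟨_, ⟨φ (X i), ⟨X i, rfl⟩, rfl⟩, by simpa [hφ] using hi⟩
  obtain ⟨⟨_, p, rfl⟩, hp⟩ := ContinuousMap.exists_mem_subalgebra_near_continuous_of_separatesPoints
    φ.range hsep (s.domRestrict f) hf.domRestrict ε hε
  refine ⟨p, fun x hx => ?_⟩
  have : ‖φ p ⟨x, hx⟩ - f x‖ < ε := hp ⟨x, hx⟩
  rwa [hφ, Real.norm_eq_abs] at this

open MvPolynomial Metric in
/-- For a nonempty compact `K ⊆ ℝⁿ` and a bounded open neighborhood `U` of
`K`, there are a nonnegative polynomial function `P` and reals `0 < ε₁ < ε₂` with `P < ε₁`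
on `K`, `P > ε₂` on the frontier of `U`, and `0` a regular value of both `P - ε₁` and
`P - ε₂` (the gradient of `P` is nonzero wherever `P = ε₁` or `P = ε₂`). -/
theorem stmt7 (n : ℕ) (K : Set (Fin n → ℝ)) (hK : IsCompact K) (hKne : K.Nonempty)
    (U : Set (Fin n → ℝ)) (hUo : IsOpen U) (hUb : Bornology.IsBounded U) (hKU : K ⊆ U) :
    ∃ (P : MvPolynomial (Fin n) ℝ) (ε₁ ε₂ : ℝ),
      0 < ε₁ ∧ ε₁ < ε₂ ∧
      (∀ x : Fin n → ℝ, 0 ≤ MvPolynomial.eval x P) ∧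
      (∀ x ∈ K, MvPolynomial.eval x P < ε₁) ∧
      (∀ x ∈ frontier U, ε₂ < MvPolynomial.eval x P) ∧
      (∀ x : Fin n → ℝ, MvPolynomial.eval x P = ε₁ ∨ MvPolynomial.eval x P = ε₂ →
        fderiv ℝ (fun y => MvPolynomial.eval y P) x ≠ 0) := by
  obtain ⟨δ, hδ, hKδU⟩ := hK.exists_thickening_subset_open hUo hKU
  obtain ⟨Q, hQ⟩ := exists_mvPolynomial_near_of_continuousOn hUb.isCompact_closure
    (continuous_infDist_pt K).continuousOn (by positivity : 0 < δ / 8)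
  obtain ⟨R, hRQ, hR⟩ := exists_near_countable_setOf_gradient_eq_zero Q hUb.closure
    (by positivity : 0 < δ / 8)
  have hR_near : ∀ x ∈ closure U, |eval x R - infDist x K| < δ / 4 := fun x hx => by
    have := abs_sub_lt_iff.mp (hQ x hx)
    have := abs_sub_lt_iff.mp (hRQ x hx)
    exact abs_sub_lt_iff.mpr ⟨by linarith, by linarith⟩
  have hRK : ∀ x ∈ K, eval x (R * R) < (δ / 4) * (δ / 4) := fun x hx => by
    have := hR_near x (subset_closure (hKU hx))
    rw [infDist_zero_of_mem hx, sub_zero] at this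
    simpa [abs_mul_abs_self] using mul_self_lt_mul_self (abs_nonneg _) this
  have hRF : ∀ x ∈ frontier U, (3 * δ / 4) * (3 * δ / 4) < eval x (R * R) := fun x hx => by
    have hxU : x ∉ U := by rw [hUo.frontier_eq] at hx; exact hx.2
    have hδx : δ ≤ infDist x K :=
      not_lt.mp fun h => hxU (hKδU ((mem_thickening_iff_infDist_lt hKne).mpr h))
    have := abs_sub_lt_iff.mp (hR_near x (frontier_subset_closure hx))
    rw [map_mul]
    exact mul_self_lt_mul_self (by positivity) (by linarith)
  obtain ⟨ε₁, ε₂, h₁, h₁₂, h₂, hreg⟩ :=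
    exists_regular_values_mul_self hR (by positivity)
      (by nlinarith : (δ / 4) * (δ / 4) < (3 * δ / 4) * (3 * δ / 4))
  exact ⟨R * R, ε₁, ε₂, lt_of_le_of_lt (by positivity) h₁, h₁₂,
    fun x => by simpa using mul_self_nonneg _, fun x hx => (hRK x hx).trans h₁,
    fun x hx => h₂.trans (hRF x hx), hreg⟩
end

section
/- Let c > 0 and define φ_c : ℝ → ℝ by φ_c(t) = |2c − |t − c|| − c. Then: (i) φ_c(t) = t for every t with |t| ≤ c; and (ii) for every M ≥ 0 there exists a natural number i₀ such that for every i ≥ i₀ and every t ∈ ℝ with |t| ≤ M, the i-th iterate satisfies |φ_c^{[i]}(t)| ≤ c. -/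
/-!
Inside `[-c, c]` the map `φ_c` is the identity, and one application of `φ_c` sends `t` either
into `[-c, c]` or to a point of absolute value at most `|t| - 2c`. So after `i` steps
`|φ_c^[i] t| ≤ max c (|t| - 2ci)`, which is at most `c` as soon as `2ci ≥ M`.
-/

def tentMap (c t : ℝ) : ℝ := abs (2 * c - |t - c|) - c

theorem tentMap_eq_self_of_abs_le {c t : ℝ} (ht : |t| ≤ c) : tentMap c t = t := by
  obtain ⟨hlo, hhi⟩ := abs_le.1 ht
  rw [tentMap, abs_of_nonpos (sub_nonpos.2 hhi), abs_of_nonneg (by linarith)]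
  ring

theorem tentMap_le {c : ℝ} (hc : 0 ≤ c) (t : ℝ) : tentMap c t ≤ max c (|t| - 2 * c) := by
  unfold tentMap
  rcases le_total |t - c| (2 * c) with h | h
  · rw [abs_of_nonneg (sub_nonneg.2 h)]
    exact le_max_of_le_left (by linarith [abs_nonneg (t - c)])
  · rw [abs_of_nonpos (sub_nonpos.2 h)]
    have : |t - c| ≤ |t| + c := (abs_sub t c).trans_eq (by rw [abs_of_nonneg hc])
    exact le_max_of_le_right (by linarith)

theorem neg_le_tentMap (c t : ℝ) : -c ≤ tentMap c t := by
  simp only [tentMap, neg_le_sub_iff_le_add, le_add_iff_nonneg_left, abs_nonneg]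

theorem abs_tentMap_le {c : ℝ} (hc : 0 ≤ c) (t : ℝ) : |tentMap c t| ≤ max c (|t| - 2 * c) :=
  abs_le.2 ⟨(neg_le_neg (le_max_left _ _)).trans (neg_le_tentMap c t), tentMap_le hc t⟩

theorem abs_iterate_le_max {f : ℝ → ℝ} {c d : ℝ} (hd : 0 ≤ d)
    (hf : ∀ t, |f t| ≤ max c (|t| - d)) (n : ℕ) (t : ℝ) :
    |f^[n] t| ≤ max c (|t| - n * d) := by
  induction n with
  | zero => simp
  | succ n ih =>
    rw [Function.iterate_succ_apply']
    calc |f (f^[n] t)| ≤ max c (|f^[n] t| - d) := hf _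
      _ ≤ max c (max c (|t| - n * d) - d) := by gcongr
      _ ≤ max c (|t| - (n + 1 : ℕ) * d) := by
        rw [← max_sub_sub_right, Nat.cast_succ]
        exact max_le (le_max_left _ _) (max_le (le_max_of_le_left (by linarith))
          (le_max_of_le_right (by linarith)))

/-- For `c > 0` let `φ_c t = |2c − |t − c|| − c`. Then (i) `φ_c t = t`
whenever `|t| ≤ c`, and (ii) for every `M ≥ 0` there is `i₀` such that for all `i ≥ i₀` and
all `t` with `|t| ≤ M`, the `i`-th iterate satisfies `|φ_c^[i] t| ≤ c`. -/
theorem stmt8 (c : ℝ) (hc : 0 < c) :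
    let φ : ℝ → ℝ := fun t => abs (2 * c - abs (t - c)) - c
    (∀ t : ℝ, abs t ≤ c → φ t = t) ∧
      (∀ M : ℝ, 0 ≤ M → ∃ i₀ : ℕ, ∀ i : ℕ, i₀ ≤ i → ∀ t : ℝ, abs t ≤ M →
        abs (φ^[i] t) ≤ c) := by
  intro φ
  show (∀ t, |t| ≤ c → tentMap c t = t) ∧ ∀ M : ℝ, 0 ≤ M → ∃ i₀ : ℕ, ∀ i, i₀ ≤ i →
    ∀ t : ℝ, |t| ≤ M → |(tentMap c)^[i] t| ≤ c
  refine ⟨fun t => tentMap_eq_self_of_abs_le, fun M _ => ⟨⌈M / (2 * c)⌉₊, fun i hi t ht => ?_⟩⟩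
  have hM : M ≤ i * (2 * c) :=
    (div_le_iff₀ (by positivity)).1 ((Nat.le_ceil _).trans (by exact_mod_cast hi))
  have hiter := abs_iterate_le_max (by positivity) (abs_tentMap_le hc.le) i t
  exact hiter.trans (max_le le_rfl (by linarith))
end

section
/- Let c > 0 and define φ_c : ℝ → ℝ by φ_c(t) = |2c − |t − c|| − c. Let U ⊆ ℝ^n be open, k a nonnegative integer, and G : U → ℝ a function of class C^k on U. Let i be a natural number and x ∈ U a point such that |φ_c^{[i]}(G(x))| ≠ c. Then the function φ_c^{[i]} ∘ G is of class C^k on a neighborhood of x (in particular, it is k times continuously differentiable at x). -/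
/-!
The map `φ_c` is a composition of affine maps and two absolute values, so it is smooth away from
its kinks `t = c` (where `t - c = 0`) and `t = -c, 3c` (where `2c - |t - c| = 0`). At every kink
`|φ_c t| = c`, and `±c` are mapped to `±c`, so `|φ_c^[i] t| ≠ c` keeps the whole orbit
`t, φ_c t, …, φ_c^[i-1] t` away from the kinks; the chain rule then gives the claim.
-/

open Function

/-- The map `φ_c`. -/
def foldMap (c : ℝ) : ℝ → ℝ := fun t => |(2 * c - |t - c|)| - c

variable {c : ℝ}

lemma foldMap_self (hc : 0 ≤ c) : foldMap c c = c := by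
  simp only [foldMap, sub_self, abs_zero, sub_zero, abs_of_nonneg (by linarith : 0 ≤ 2 * c)]
  ring

lemma foldMap_neg_self (hc : 0 ≤ c) : foldMap c (-c) = -c := by
  have h : |-c - c| = 2 * c := by rw [abs_of_nonpos (by linarith)]; ring
  simp only [foldMap, h, sub_self, abs_zero, zero_sub]

lemma abs_foldMap_of_abs_eq (hc : 0 ≤ c) {t : ℝ} (ht : |t| = c) : |foldMap c t| = c := by
  rcases (abs_eq hc).mp ht with rfl | rfl
  · rw [foldMap_self hc, ht]
  · rw [foldMap_neg_self hc, abs_neg, abs_of_nonneg hc]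

lemma contDiffAt_foldMap (hc : 0 ≤ c) {m : ℕ∞} {t : ℝ} (ht : |foldMap c t| ≠ c) :
    ContDiffAt ℝ m (foldMap c) t := by
  have hkink₁ : t - c ≠ 0 := by
    intro h
    rw [sub_eq_zero.mp h, foldMap_self hc, abs_of_nonneg hc] at ht
    exact ht rfl
  have hkink₂ : 2 * c - |t - c| ≠ 0 := by
    intro h
    simp only [foldMap, h, abs_zero, zero_sub, abs_neg, abs_of_nonneg hc] at ht
    exact ht rfl
  have hinner : ContDiffAt ℝ m (fun t => 2 * c - |t - c|) t :=
    contDiffAt_const.sub ((contDiffAt_id.sub contDiffAt_const).abs hkink₁)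
  exact ((contDiffAt_abs hkink₂).comp t hinner).sub contDiffAt_const

lemma contDiffAt_iterate_foldMap (hc : 0 ≤ c) {m : ℕ∞} {t : ℝ} :
    ∀ {i : ℕ}, |(foldMap c)^[i] t| ≠ c → ContDiffAt ℝ m (foldMap c)^[i] t
  | 0, _ => contDiffAt_id
  | i + 1, ht => by
    rw [iterate_succ'] at ht ⊢
    have horbit : |(foldMap c)^[i] t| ≠ c := fun h => ht (abs_foldMap_of_abs_eq hc h)
    exact (contDiffAt_foldMap hc ht).comp t (contDiffAt_iterate_foldMap hc horbit)

/-- For `c > 0` let `φ_c t = |2c − |t − c|| − c`. If `U ⊆ ℝⁿ` is open,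
`G : U → ℝ` is of class `C^k` on `U`, `x ∈ U` and `|φ_c^[i] (G x)| ≠ c`, then `φ_c^[i] ∘ G`
is of class `C^k` on a neighborhood of `x`. -/
theorem stmt9 (n k : ℕ) (c : ℝ) (hc : 0 < c)
    (U : Set (Fin n → ℝ)) (hU : IsOpen U) (G : (Fin n → ℝ) → ℝ)
    (hG : ContDiffOn ℝ k G U) (i : ℕ) (x : Fin n → ℝ) (hx : x ∈ U)
    (hne : abs ((fun t => abs (2 * c - abs (t - c)) - c)^[i] (G x)) ≠ c) :
    ∃ V ∈ nhds x, V ⊆ U ∧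
      ContDiffOn ℝ k (fun y => (fun t => abs (2 * c - abs (t - c)) - c)^[i] (G y)) V := by
  have hU_nhds : U ∈ nhds x := hU.mem_nhds hx
  have hcomp : ContDiffAt ℝ k (fun y => (foldMap c)^[i] (G y)) x :=
    (contDiffAt_iterate_foldMap hc.le hne).comp x (hG.contDiffAt hU_nhds)
  obtain ⟨V, hV, hV_diff⟩ := hcomp.contDiffOn le_rfl (by simp)
  exact ⟨V ∩ U, Filter.inter_mem hV hU_nhds, Set.inter_subset_right,
    hV_diff.mono Set.inter_subset_left⟩
end

section
/- Let k and m be nonnegative integers, b ∈ ℝ^n, and let β : ℝ^n → ℝ and h₁, h₂ : ℝ^n → ℝ^m be maps of class C^k on a neighborhood of b. Assume β(b) = 0 and all partial derivatives of β of orders 1 through k vanish at b (equivalently, the iterated derivatives of β of orders 1,…,k at b are zero). Then for every i with 0 ≤ i ≤ k, the i-th iterated derivative at b of the map x ↦ β(x)·h₁(x) + (1 − β(x))·h₂(x) equals the i-th iterated derivative of h₂ at b. -/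
/-!
Write the blend as `β • (h₁ - h₂) + h₂`. By the Leibniz rule, the `i`-th derivative of
`β • (h₁ - h₂)` at `b` is a sum of terms each containing a derivative of `β` of order at most
`i`, and all of these vanish at `b`.
-/

open ContDiff

section

variable {𝕜 𝕜' E F : Type*} [NontriviallyNormedField 𝕜] [NormedField 𝕜'] [NormedAlgebra 𝕜 𝕜']
  [NormedAddCommGroup E] [NormedSpace 𝕜 E] [NormedAddCommGroup F] [NormedSpace 𝕜 F]
  [NormedSpace 𝕜' F] [IsScalarTower 𝕜 𝕜' F]

theorem iteratedFDerivWithin_smul_eq_zero_of_flat {f : E → 𝕜'} {g : E → F} {s : Set E} {x : E}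
    {N : ℕ∞ω} (hf : ContDiffOn 𝕜 N f s) (hg : ContDiffOn 𝕜 N g s) (hs : UniqueDiffOn 𝕜 s)
    (hx : x ∈ s) {n : ℕ} (hn : n ≤ N)
    (hflat : ∀ i ≤ n, iteratedFDerivWithin 𝕜 i f s x = 0) :
    iteratedFDerivWithin 𝕜 n (fun y => f y • g y) s x = 0 := by
  refine norm_le_zero_iff.mp ((norm_iteratedFDerivWithin_smul_le hf hg hs hx hn).trans_eq ?_)
  refine Finset.sum_eq_zero fun i hi => ?_
  rw [hflat i (Nat.lt_succ_iff.mp (Finset.mem_range.mp hi)), norm_zero, mul_zero, zero_mul]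

end

/-- If `β : ℝⁿ → ℝ` and `h₁, h₂ : ℝⁿ → ℝ^m` are of class `C^k` on a
neighborhood of `b`, `β b = 0`, and all iterated derivatives of `β` of orders `1,…,k`
vanish at `b`, then for `0 ≤ i ≤ k` the `i`-th iterated derivative at `b` of
`x ↦ β x • h₁ x + (1 − β x) • h₂ x` equals that of `h₂`. -/
theorem stmt11 (n m k : ℕ) (b : Fin n → ℝ) (V : Set (Fin n → ℝ)) (hV : IsOpen V)
    (hb : b ∈ V) (β : (Fin n → ℝ) → ℝ) (h₁ h₂ : (Fin n → ℝ) → (Fin m → ℝ))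
    (hβ : ContDiffOn ℝ k β V) (hh₁ : ContDiffOn ℝ k h₁ V) (hh₂ : ContDiffOn ℝ k h₂ V)
    (hβb : β b = 0)
    (hflat : ∀ i : ℕ, 1 ≤ i → i ≤ k → iteratedFDeriv ℝ i β b = 0) :
    ∀ i : ℕ, i ≤ k →
      iteratedFDeriv ℝ i (fun x => β x • h₁ x + (1 - β x) • h₂ x) b =
        iteratedFDeriv ℝ i h₂ b := by
  intro i hi
  have hik : (i : ℕ∞ω) ≤ k := by exact_mod_cast hi
  have hβflat : ∀ j ≤ i, iteratedFDerivWithin ℝ j β V b = 0 := fun j hji => by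
    rw [iteratedFDerivWithin_of_isOpen j hV hb]
    rcases j.eq_zero_or_pos with rfl | hj
    · ext; simp [hβb]
    · exact hflat j hj (hji.trans hi)
  have hblend : (fun x => β x • h₁ x + (1 - β x) • h₂ x) =
      fun x => β x • (h₁ x - h₂ x) + h₂ x := by
    ext x : 1
    rw [smul_sub, sub_smul, one_smul]
    abel
  have hprod := iteratedFDerivWithin_smul_eq_zero_of_flat hβ (hh₁.sub hh₂) hV.uniqueDiffOn hb
    hik hβflat
  rw [iteratedFDerivWithin_of_isOpen i hV hb] at hprod
  have hV_nhds := hV.mem_nhds hb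
  rw [hblend, fun_iteratedFDeriv_add_apply (f := fun x => β x • (h₁ x - h₂ x))
    (((hβ.smul (hh₁.sub hh₂)).contDiffAt hV_nhds).of_le hik)
    ((hh₂.contDiffAt hV_nhds).of_le hik), hprod, zero_add]
end

section
/- Let k be a nonnegative integer, let U, V ⊆ ℝ^n be open sets, and let u, v : ℝ^n → ℝ^p be maps of class C^k on U. Assume that for every point b ∈ U lying in the frontier of V and every i with 0 ≤ i ≤ k, the i-th iterated derivative of u at b equals the i-th iterated derivative of v at b. Then the map w : U → ℝ^p defined by w(x) = u(x) if x belongs to the closure of V and w(x) = v(x) otherwise, is of class C^k on U. -/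
/-!
Away from the frontier of `t`, the map `t.piecewise f g` coincides near each point with `f` or
with `g`. At a frontier point the Taylor series of `f` and `g` agree, so their derivatives within
`s ∩ t` and within `s ∩ tᶜ` glue to a derivative within `s`; hence `t.piecewise p q` is a Taylor
series of `t.piecewise f g`. The theorem is the case `t = closure V`, whose frontier lies in that
of `V`.
-/

open Classical

open Set Filter

section Piecewise

variable {𝕜 : Type*} [NontriviallyNormedField 𝕜]
  {E : Type*} [NormedAddCommGroup E] [NormedSpace 𝕜 E]
  {F : Type*} [NormedAddCommGroup F] [NormedSpace 𝕜 F]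
  {s t : Set E} [∀ x, Decidable (x ∈ t)]

theorem HasFDerivWithinAt.piecewise {f g : E → F} {f' g' : E →L[𝕜] F} {x : E}
    (hf : HasFDerivWithinAt f f' s x) (hg : HasFDerivWithinAt g g' s x)
    (hfg : x ∈ frontier t → f x = g x ∧ f' = g') :
    HasFDerivWithinAt (t.piecewise f g) (if x ∈ t then f' else g') s x := by
  by_cases hxt : x ∈ frontier t
  · obtain ⟨hfgx, rfl⟩ := hfg hxt
    have hval : t.piecewise f g x = f x := by by_cases hx : x ∈ t <;> simp [hx, hfgx]
    rw [ite_self, ← inter_union_compl s t]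
    have hf_t : HasFDerivWithinAt (t.piecewise f g) f' (s ∩ t) x :=
      (hf.mono inter_subset_left).congr (fun y hy => piecewise_eq_of_mem _ _ _ hy.2) hval
    have hg_tc : HasFDerivWithinAt (t.piecewise f g) f' (s ∩ tᶜ) x :=
      (hg.mono inter_subset_left).congr (fun y hy => piecewise_eq_of_notMem _ _ _ hy.2)
        (hval.trans hfgx)
    exact hf_t.union hg_tc
  · rw [← mem_compl_iff, compl_frontier_eq_union_interior] at hxt
    rcases hxt with hxt | hxt
    · have hx : x ∈ t := interior_subset hxt
      rw [if_pos hx]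
      exact hf.congr_of_eventuallyEq (eventuallyEq_of_mem (mem_nhdsWithin_of_mem_nhds
        (mem_interior_iff_mem_nhds.1 hxt)) (piecewise_eqOn t f g)) (piecewise_eq_of_mem _ _ _ hx)
    · have hx : x ∉ t := interior_subset hxt
      rw [if_neg hx]
      exact hg.congr_of_eventuallyEq (eventuallyEq_of_mem (mem_nhdsWithin_of_mem_nhds
        (mem_interior_iff_mem_nhds.1 hxt)) (piecewise_eqOn_compl t f g))
        (piecewise_eq_of_notMem _ _ _ hx)

theorem FormalMultilinearSeries.piecewise_eval {p q : E → FormalMultilinearSeries 𝕜 E F}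
    (m : ℕ) : (fun x => t.piecewise p q x m) = t.piecewise (p · m) (q · m) :=
  funext fun _ => apply_piecewise t p q fun _ P => P m

theorem HasFTaylorSeriesUpToOn.piecewise {n : WithTop ℕ∞} {f g : E → F}
    {p q : E → FormalMultilinearSeries 𝕜 E F}
    (hf : HasFTaylorSeriesUpToOn n f p s) (hg : HasFTaylorSeriesUpToOn n g q s)
    (hpq : ∀ x ∈ s ∩ frontier t, ∀ m : ℕ, m ≤ n → p x m = q x m) :
    HasFTaylorSeriesUpToOn n (t.piecewise f g) (t.piecewise p q) s where
  zero_eq x hx := by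
    by_cases hxt : x ∈ t
    · simpa [hxt] using hf.zero_eq x hx
    · simpa [hxt] using hg.zero_eq x hx
  fderivWithin m hm x hx := by
    rw [FormalMultilinearSeries.piecewise_eval]
    refine ((hf.fderivWithin m hm x hx).piecewise (hg.fderivWithin m hm x hx) fun hxt =>
      ⟨hpq x ⟨hx, hxt⟩ m hm.le, ?_⟩).congr_fderiv ?_
    · rw [hpq x ⟨hx, hxt⟩ (m + 1) (ENat.add_one_natCast_le_withTop_of_lt hm)]
    · by_cases hxt : x ∈ t <;> simp [hxt]
  cont m hm := by
    rw [FormalMultilinearSeries.piecewise_eval]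
    exact ContinuousOn.piecewise (fun x hx => hpq x hx m hm)
      ((hf.cont m hm).mono inter_subset_left) ((hg.cont m hm).mono inter_subset_left)

theorem ContDiffOn.piecewise {n : ℕ∞} {f g : E → F} (hs : IsOpen s)
    (hf : ContDiffOn 𝕜 n f s) (hg : ContDiffOn 𝕜 n g s)
    (hfg : ∀ x ∈ s ∩ frontier t, ∀ i : ℕ, i ≤ n →
      iteratedFDeriv 𝕜 i f x = iteratedFDeriv 𝕜 i g x) :
    ContDiffOn 𝕜 n (t.piecewise f g) s := by
  refine ((hf.ftaylorSeriesWithin hs.uniqueDiffOn).piecewise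
    (hg.ftaylorSeriesWithin hs.uniqueDiffOn) fun x hx i hi => ?_).contDiffOn
  simp only [ftaylorSeriesWithin, iteratedFDerivWithin_of_isOpen i hs hx.1]
  exact hfg x hx i (mod_cast hi)

end Piecewise

theorem stmt13_general (n p k : ℕ) (U V : Set (Fin n → ℝ)) (hU : IsOpen U)
    (u v : (Fin n → ℝ) → (Fin p → ℝ))
    (hu : ContDiffOn ℝ k u U) (hv : ContDiffOn ℝ k v U)
    (hagree : ∀ b ∈ U ∩ frontier V, ∀ i : ℕ, i ≤ k →
      iteratedFDeriv ℝ i u b = iteratedFDeriv ℝ i v b) :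
    ContDiffOn ℝ k (fun x => if x ∈ closure V then u x else v x) U :=
  ContDiffOn.piecewise (n := k) hU hu hv fun b hb i hi =>
    hagree b ⟨hb.1, frontier_closure_subset hb.2⟩ i (mod_cast hi)

/-- If `u, v : ℝⁿ → ℝ^p` are of class `C^k` on an open set `U` and their
iterated derivatives up to order `k` agree at every point of `U ∩ frontier V` (for an open
set `V`), then the map equal to `u` on the closure of `V` and to `v` elsewhere is of class
`C^k` on `U`. -/
theorem stmt13 (n p k : ℕ) (U V : Set (Fin n → ℝ)) (hU : IsOpen U) (hV : IsOpen V)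
    (u v : (Fin n → ℝ) → (Fin p → ℝ))
    (hu : ContDiffOn ℝ k u U) (hv : ContDiffOn ℝ k v U)
    (hagree : ∀ b ∈ U ∩ frontier V, ∀ i : ℕ, i ≤ k →
      iteratedFDeriv ℝ i u b = iteratedFDeriv ℝ i v b) :
    ContDiffOn ℝ k (fun x => if x ∈ closure V then u x else v x) U :=
  stmt13_general n p k U V hU u v hu hv hagree
end

section
/- Let K ⊆ ℝ^n be a nonempty compact set, let U be a bounded open neighborhood of K in ℝ^n, and let k be a nonnegative integer. Then there exist open sets N₁, N₂ ⊆ ℝ^n with K ⊆ N₁, closure(N₁) ⊆ N₂ and closure(N₂) ⊆ U, real polynomial functions P₁, P₂ : ℝ^n → ℝ, and a function β : ℝ^n → ℝ of class C^k with β(ℝ^n) ⊆ [0,1], such that: (1) for i = 1, 2, the frontier of N_i is a union of connected components of the zero set {x ∈ ℝ^n : P_i(x) = 0}, and the gradient of P_i is nonzero at every point of {P_i = 0}; (2) β = 0 on ℝ^n \ N₂ and β = 1 on closure(N₁); and (3) all partial derivatives of β of orders 1 through k vanish at every point of frontier(N₁) ∪ frontier(N₂). -/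
open MvPolynomial Filter Topology MeasureTheory Metric

section Aux

variable {n : ℕ}

lemma st14_contDiff (Q : MvPolynomial (Fin n) ℝ) :
    ContDiff ℝ (⊤ : ℕ∞) (fun x : Fin n → ℝ => eval x Q) := by
  induction Q using MvPolynomial.induction_on with
  | C a => simpa using contDiff_const
  | add p q hp hq => simpa using hp.add hq
  | mul_X p i hp =>
      simpa using hp.mul ((ContinuousLinearMap.proj i : (Fin n → ℝ) →L[ℝ] ℝ).contDiff)

lemma st14_growth (Q : MvPolynomial (Fin n) ℝ) :
    ∃ C : ℝ, 0 ≤ C ∧ ∀ x : Fin n → ℝ,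
      |eval x Q| ≤ C * (max 1 ‖x‖) ^ Q.totalDegree := by
  refine ⟨∑ d ∈ Q.support, |Q.coeff d|, Finset.sum_nonneg fun _ _ => abs_nonneg _, fun x => ?_⟩
  have hM1 : (1:ℝ) ≤ max 1 ‖x‖ := le_max_left _ _
  rw [eval_eq']
  refine (Finset.abs_sum_le_sum_abs _ _).trans ?_
  rw [Finset.sum_mul]
  refine Finset.sum_le_sum fun d hd => ?_
  rw [abs_mul]
  refine mul_le_mul_of_nonneg_left ?_ (abs_nonneg _)
  have h1 : |∏ i, x i ^ d i| ≤ ∏ i : Fin n, (max 1 ‖x‖) ^ d i := by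
    rw [Finset.abs_prod]
    refine Finset.prod_le_prod (fun _ _ => abs_nonneg _) fun i _ => ?_
    rw [abs_pow]
    exact pow_le_pow_left₀ (abs_nonneg _) ((norm_le_pi_norm x i).trans (le_max_right _ _)) _
  refine h1.trans ?_
  rw [Finset.prod_pow_eq_pow_sum]
  refine pow_le_pow_right₀ hM1 ?_
  have : ∑ i : Fin n, d i = d.sum fun _ e => e := by
    rw [Finsupp.sum_fintype]; simp
  rw [this]
  exact MvPolynomial.le_totalDegree hd

lemma st14_sw (s : Set (Fin n → ℝ)) (hs : IsCompact s)
    (f : (Fin n → ℝ) → ℝ) (hf : Continuous f) (ε : ℝ) (hε : 0 < ε) :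
    ∃ Q : MvPolynomial (Fin n) ℝ, ∀ x ∈ s, |eval x Q - f x| < ε := by
  haveI : CompactSpace s := isCompact_iff_compactSpace.mp hs
  set c : Fin n → C(s, ℝ) := fun i => ⟨fun x => (x : Fin n → ℝ) i,
    (continuous_apply i).comp continuous_subtype_val⟩ with hc
  set φ : MvPolynomial (Fin n) ℝ →ₐ[ℝ] C(s, ℝ) := aeval c with hφ
  have w : (φ.range : Subalgebra ℝ C(s, ℝ)).SeparatesPoints := by
    intro x y hxy
    have : ∃ i, (x : Fin n → ℝ) i ≠ (y : Fin n → ℝ) i := by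
      by_contra h
      push_neg at h
      exact hxy (Subtype.ext (funext h))
    obtain ⟨i, hi⟩ := this
    exact ⟨c i, ⟨φ (X i), ⟨X i, rfl⟩, by simp [hφ]⟩, hi⟩
  obtain ⟨g, hg⟩ := ContinuousMap.exists_mem_subalgebra_near_continuousMap_of_separatesPoints
    φ.range w ⟨fun x => f x, hf.comp continuous_subtype_val⟩ ε hε
  obtain ⟨Q, hQ⟩ := g.2
  refine ⟨Q, fun x hx => ?_⟩
  have h1 : eval x Q - f x = ((g : C(s, ℝ)) - ⟨fun x => f x, hf.comp continuous_subtype_val⟩)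
      ⟨x, hx⟩ := by
    have h2 : (g : C(s, ℝ)) ⟨x, hx⟩ = eval x Q := by
      rw [← hQ]
      have := comp_aeval_apply (ContinuousMap.evalAlgHom ℝ ℝ (⟨x, hx⟩ : s)) (f := c) Q
      have h5 : ((aeval c).toRingHom Q) (⟨x, hx⟩ : s)
          = (ContinuousMap.evalAlgHom ℝ ℝ (⟨x, hx⟩ : s)) ((aeval c) Q) := rfl
      rw [hφ, h5, this]
      have h4 : (fun i => (ContinuousMap.evalAlgHom ℝ ℝ (⟨x, hx⟩ : s)) (c i)) = x := by
        funext i; rfl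
      rw [h4, ← MvPolynomial.coe_aeval_eq_eval]
      rfl
    simp [h2]
  rw [h1]
  calc _ ≤ ‖(g : C(s, ℝ)) - _‖ := by
        rw [← Real.norm_eq_abs]
        exact ContinuousMap.norm_coe_le_norm _ _
    _ < ε := hg

noncomputable def st14grad (q : (Fin n → ℝ) → ℝ) : (Fin n → ℝ) → (Fin n → ℝ) :=
  fun x i => fderiv ℝ q x (Pi.single (M := fun _ => ℝ) i 1)

lemma st14grad_eq_zero_iff (q : (Fin n → ℝ) → ℝ) (x : Fin n → ℝ) :
    st14grad q x = 0 ↔ fderiv ℝ q x = 0 := by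
  constructor
  · intro h
    ext v
    have hv : v = ∑ i : Fin n, v i • Pi.single (M := fun _ => ℝ) i 1 := by
      funext j
      simp [Finset.sum_apply, Pi.single_apply]
    rw [hv]
    simp only [map_sum, (fderiv ℝ q x).map_smul]
    have : ∀ i : Fin n, fderiv ℝ q x (Pi.single (M := fun _ => ℝ) i 1) = 0 :=
      fun i => congrFun h i
    simp [this]
  · intro h; funext i; simp [st14grad, h]

lemma st14grad_contDiff {q : (Fin n → ℝ) → ℝ} (hq : ContDiff ℝ (⊤ : ℕ∞) q) :
    ContDiff ℝ (⊤ : ℕ∞) (st14grad q) := by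
  have h1 : ContDiff ℝ (⊤ : ℕ∞) (fderiv ℝ q) := hq.fderiv_right (mod_cast le_top)
  have h2 : ContDiff ℝ (⊤ : ℕ∞) (fun A : (Fin n → ℝ) →L[ℝ] ℝ =>
      (fun i => A (Pi.single (M := fun _ => ℝ) i 1) : Fin n → ℝ)) :=
    (ContinuousLinearMap.pi (fun i : Fin n =>
      (ContinuousLinearMap.apply ℝ ℝ (Pi.single (M := fun _ => ℝ) i 1)))).contDiff
  exact h2.comp h1

lemma st14_good_shift {q : (Fin n → ℝ) → ℝ} (hq : ContDiff ℝ (⊤ : ℕ∞) q) {r : ℝ} (hr : 0 < r) :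
    ∃ a : Fin n → ℝ, ‖a‖ < r ∧ ∀ x : Fin n → ℝ, st14grad q x = -a →
      (fderiv ℝ (st14grad q) x).det ≠ 0 := by
  set Φ := st14grad q
  have hΦ : ContDiff ℝ (⊤ : ℕ∞) Φ := st14grad_contDiff hq
  set B := {x : Fin n → ℝ | (fderiv ℝ Φ x).det = 0}
  have himg : volume (Φ '' B) = 0 := by
    apply addHaar_image_eq_zero_of_det_fderivWithin_eq_zero volume
      (f' := fun x => fderiv ℝ Φ x)
    · intro x _
      exact ((hΦ.differentiable (by simp)) x).hasFDerivAt.hasFDerivWithinAt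
    · intro x hx
      exact hx
  have hball : 0 < volume (Metric.ball (0 : Fin n → ℝ) r) := Metric.measure_ball_pos _ _ hr
  have : ¬ (Metric.ball (0 : Fin n → ℝ) r ⊆ Φ '' B) := by
    intro hsub
    exact absurd (le_antisymm ((measure_mono hsub).trans himg.le) zero_le) (ne_of_gt hball)
  obtain ⟨b, hb, hbn⟩ := Set.not_subset.mp this
  refine ⟨-b, by simpa using (mem_ball_zero_iff.mp hb), fun x hx => ?_⟩
  intro hdet
  exact hbn ⟨x, hdet, by rw [hx]; simp⟩

lemma st14_isolated {Φ : (Fin n → ℝ) → (Fin n → ℝ)} (hΦ : ContDiff ℝ (⊤ : ℕ∞) Φ)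
    (x₀ : Fin n → ℝ) (h : (fderiv ℝ Φ x₀).det ≠ 0) :
    ∀ᶠ y in nhds x₀, Φ y = Φ x₀ → y = x₀ := by
  have hdet : LinearMap.det ((fderiv ℝ Φ x₀).toLinearMap) ≠ 0 := h
  set e : (Fin n → ℝ) ≃ₗ[ℝ] (Fin n → ℝ) := LinearMap.equivOfDetNeZero _ hdet
  set e' : (Fin n → ℝ) ≃L[ℝ] (Fin n → ℝ) := e.toContinuousLinearEquiv
  have hstrict : HasStrictFDerivAt Φ (e' : (Fin n → ℝ) →L[ℝ] (Fin n → ℝ)) x₀ := by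
    have h1 : HasStrictFDerivAt Φ (fderiv ℝ Φ x₀) x₀ :=
      hΦ.contDiffAt.hasStrictFDerivAt (by simp)
    exact h1
  have h2 : hstrict.localInverse Φ _ _ (Φ x₀) = x₀ :=
    hstrict.eventually_left_inverse.self_of_nhds
  filter_upwards [hstrict.eventually_left_inverse] with y hy hyx
  rw [← hy, hyx, h2]

variable {E : Type*} [NormedAddCommGroup E] [NormedSpace ℝ E]

lemma st14_iteratedFDeriv_zero {f : E → ℝ} {c : ℝ} {O : Set E} (hO : IsOpen O)
    {x : E} (hx : x ∈ O) (hf : ∀ y ∈ O, f y = c) {i : ℕ} (hi : 1 ≤ i) :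
    iteratedFDeriv ℝ i f x = 0 := by
  have h1 : iteratedFDeriv ℝ i f x = iteratedFDerivWithin ℝ i f O x :=
    (iteratedFDerivWithin_of_isOpen i hO hx).symm
  have h2 : iteratedFDerivWithin ℝ i f O x = iteratedFDerivWithin ℝ i (fun _ => c) O x :=
    iteratedFDerivWithin_congr (fun y hy => hf y hy) hx i
  have h3 : iteratedFDerivWithin ℝ i (fun _ => c) O x = iteratedFDeriv ℝ i (fun _ => c) x :=
    iteratedFDerivWithin_of_isOpen i hO hx
  rw [h1, h2, h3, iteratedFDeriv_const_of_ne (by omega)]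
  rfl

omit [NormedSpace ℝ E] in
lemma st14_finite_of_isolated {T : Set E} (hT : IsCompact T)
    (h : ∀ x ∈ T, ∀ᶠ y in 𝓝 x, y ∈ T → y = x) : T.Finite := by
  have hcov : ∀ x : E, ∃ O : Set E, IsOpen O ∧ (x ∈ T → x ∈ O ∧ ∀ y ∈ O, y ∈ T → y = x) := by
    intro x
    by_cases hx : x ∈ T
    · obtain ⟨O, ⟨hxO, hOopen⟩, hOsub⟩ := (nhds_basis_opens x).eventually_iff.mp (h x hx)
      exact ⟨O, hOopen, fun _ => ⟨hxO, fun y hy hyT => hOsub hy hyT⟩⟩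
    · exact ⟨Set.univ, isOpen_univ, fun hc => absurd hc hx⟩
  choose O hOopen hprop using hcov
  obtain ⟨t, htsub, htfin, hcov⟩ := hT.elim_finite_subcover_image
    (fun x (_ : x ∈ T) => hOopen x)
    (fun x hx => Set.mem_biUnion hx ((hprop x hx).1))
  have hTt : T ⊆ t := by
    intro y hy
    obtain ⟨x, hxt, hyO⟩ := Set.mem_iUnion₂.mp (hcov hy)
    rwa [(hprop x (htsub hxt)).2 y hyO hy]
  exact htfin.subset hTt

lemma st14_frontier_eq {q : E → ℝ} (hq : ContDiff ℝ (⊤ : ℕ∞) q) (c : ℝ)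
    (hreg : ∀ x, q x = c → fderiv ℝ q x ≠ 0) :
    frontier {x | q x < c} = {x | q x = c} := by
  have hqc : Continuous q := hq.continuous
  have hopen : IsOpen {x | q x < c} := isOpen_lt hqc continuous_const
  apply Set.Subset.antisymm
  · intro x hx
    have h1 : x ∈ closure {x | q x < c} := hx.1
    have h2 : q x ≤ c := by
      have : closure {x | q x < c} ⊆ {x | q x ≤ c} :=
        closure_minimal (fun y (hy : q y < c) => le_of_lt hy)
          (isClosed_le hqc continuous_const)
      exact this h1
    have h3 : ¬ (q x < c) := by
      intro hlt
      exact hx.2 (by rw [hopen.interior_eq]; exact hlt)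
    exact le_antisymm h2 (not_lt.mp h3)
  · intro x (hx : q x = c)
    have hD := hreg x hx
    obtain ⟨v₀, hv₀⟩ : ∃ v, fderiv ℝ q x v ≠ 0 := by
      by_contra hcon
      push_neg at hcon
      exact hD (ContinuousLinearMap.ext fun v => hcon v)
    set v : E := if fderiv ℝ q x v₀ < 0 then v₀ else -v₀ with hv
    have hDv : fderiv ℝ q x v < 0 := by
      rw [hv]
      split_ifs with hcase
      · exact hcase
      · rw [map_neg]
        have : 0 < fderiv ℝ q x v₀ := lt_of_le_of_ne (not_lt.mp hcase) (Ne.symm hv₀)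
        linarith
    have hdiff : HasDerivAt (fun t : ℝ => q (x + t • v)) (fderiv ℝ q x v) 0 := by
      have hγ : HasDerivAt (fun t : ℝ => x + t • v) v 0 := by
        simpa using ((hasDerivAt_id (0:ℝ)).smul_const v).const_add x
      have hf : HasFDerivAt q (fderiv ℝ q x) (x + (0:ℝ) • v) := by
        simpa using ((hq.differentiable (by simp)) x).hasFDerivAt
      exact hf.comp_hasDerivAt 0 hγ
    have hslope : ∀ᶠ t in 𝓝[≠] (0:ℝ),
        slope (fun t : ℝ => q (x + t • v)) 0 t < 0 :=
      ((hasDerivAt_iff_tendsto_slope.mp hdiff).eventually_lt_const hDv)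
    have hmemcl : x ∈ closure {y | q y < c} := by
      rw [mem_closure_iff_nhds]
      intro s hs
      have hcont : ContinuousAt (fun t : ℝ => x + t • v) 0 :=
        (continuous_const.add (continuous_id.smul continuous_const)).continuousAt
      have hsev : ∀ᶠ t in 𝓝 (0:ℝ), x + t • v ∈ s := by
        apply hcont.eventually_mem
        simpa using hs
      have hcomb : ∀ᶠ t in 𝓝[>] (0:ℝ),
          (x + t • v ∈ s) ∧ slope (fun t : ℝ => q (x + t • v)) 0 t < 0 :=
        (hsev.filter_mono nhdsWithin_le_nhds).and
          (hslope.filter_mono (nhdsWithin_mono _ (fun t (ht : t ∈ Set.Ioi 0) => ne_of_gt ht)))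
      obtain ⟨t, ⟨hts, htsl⟩, htpos⟩ := (hcomb.and (eventually_mem_nhdsWithin)).exists
      refine ⟨x + t • v, hts, ?_⟩
      have h5 : slope (fun t : ℝ => q (x + t • v)) 0 t = (q (x + t • v) - q x) / t := by
        simp [slope_def_field]
      rw [h5] at htsl
      have htpos' : (0:ℝ) < t := htpos
      have : q (x + t • v) - q x < 0 := by
        by_contra hge
        push_neg at hge
        exact absurd htsl (not_lt.mpr (div_nonneg hge htpos'.le))
      show q (x + t • v) < c
      linarith [hx ▸ this]
    refine ⟨hmemcl, ?_⟩
    rw [hopen.interior_eq]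
    intro hxin
    exact absurd hx (ne_of_lt hxin)

lemma st14_sq_norm_le_sum (x : Fin n → ℝ) : ‖x‖^2 ≤ ∑ i, x i ^ 2 := by
  have hs : (0:ℝ) ≤ ∑ i, x i ^ 2 := Finset.sum_nonneg fun i _ => sq_nonneg _
  have h1 : ‖x‖ ≤ Real.sqrt (∑ i, x i ^ 2) := by
    refine pi_norm_le_iff_of_nonneg (Real.sqrt_nonneg _) |>.mpr fun i => ?_
    rw [Real.norm_eq_abs, ← Real.sqrt_sq_eq_abs]
    exact Real.sqrt_le_sqrt (Finset.single_le_sum (fun j _ => sq_nonneg (x j)) (Finset.mem_univ i))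
  calc ‖x‖^2 ≤ Real.sqrt (∑ i, x i ^ 2) ^ 2 := pow_le_pow_left₀ (norm_nonneg _) h1 2
    _ = _ := Real.sq_sqrt hs

end Aux


set_option maxHeartbeats 800000 in
/-- For a nonempty compact `K ⊆ ℝⁿ`, a bounded open neighborhood `U` of
`K` and `k ∈ ℕ`, there exist open sets `N₁, N₂` with `K ⊆ N₁`, `closure N₁ ⊆ N₂`,
`closure N₂ ⊆ U`, polynomials `P₁, P₂` and a `C^k` function `β : ℝⁿ → [0,1]` such that:
(1) for `i = 1, 2`, the frontier of `Nᵢ` is a union of connected components of the zero set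
of `Pᵢ`, and the gradient of `Pᵢ` is nonzero on its zero set; (2) `β = 0` off `N₂` and
`β = 1` on `closure N₁`; (3) all iterated derivatives of `β` of orders `1,…,k` vanish at
every point of `frontier N₁ ∪ frontier N₂`. -/
theorem stmt14 (n k : ℕ) (K : Set (Fin n → ℝ)) (hK : IsCompact K) (hKne : K.Nonempty)
    (U : Set (Fin n → ℝ)) (hUo : IsOpen U) (hUb : Bornology.IsBounded U) (hKU : K ⊆ U) :
    ∃ (N₁ N₂ : Set (Fin n → ℝ)) (P₁ P₂ : MvPolynomial (Fin n) ℝ)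
      (β : (Fin n → ℝ) → ℝ),
      IsOpen N₁ ∧ IsOpen N₂ ∧ K ⊆ N₁ ∧ closure N₁ ⊆ N₂ ∧ closure N₂ ⊆ U ∧
      ContDiff ℝ k β ∧ (∀ x, β x ∈ Set.Icc (0 : ℝ) 1) ∧
      -- (1) the frontiers are unions of connected components of the zero sets of `P₁, P₂`,
      -- which are nonsingular hypersurfaces
      (∀ (i : Fin 2),
        let P := if i = 0 then P₁ else P₂
        let N := if i = 0 then N₁ else N₂
        let Z := {x : Fin n → ℝ | MvPolynomial.eval x P = 0}
        frontier N ⊆ Z ∧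
        (∀ x ∈ frontier N, connectedComponentIn Z x ⊆ frontier N) ∧
        (∀ x ∈ Z, fderiv ℝ (fun y => MvPolynomial.eval y P) x ≠ 0)) ∧
      -- (2)
      (∀ x ∉ N₂, β x = 0) ∧ (∀ x ∈ closure N₁, β x = 1) ∧
      -- (3)
      (∀ x ∈ frontier N₁ ∪ frontier N₂, ∀ i : ℕ, 1 ≤ i → i ≤ k →
        iteratedFDeriv ℝ i β x = 0) := by
  classical
  -- Geometry: a thickening of K inside U, and a ball containing U.
  obtain ⟨δ, hδpos, hδsub⟩ := hK.exists_cthickening_subset_open hUo hKU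
  have hthickU : Metric.thickening δ K ⊆ U :=
    (Metric.thickening_subset_cthickening δ K).trans hδsub
  obtain ⟨R₀, hR₀⟩ := hUb.subset_ball 0
  set R : ℝ := max R₀ 1 with hRdef
  have hR1 : (1:ℝ) ≤ R := le_max_right _ _
  have hUR : U ⊆ Metric.ball 0 R := hR₀.trans (Metric.ball_subset_ball (le_max_left _ _))
  set D : ℝ := 4*((n:ℝ)+1)*R^2 with hDdef
  have hn0 : (0:ℝ) ≤ (n:ℝ) := Nat.cast_nonneg n
  have hD0 : 0 < D := by positivity
  have hD4 : (4:ℝ) ≤ D := by nlinarith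
  set L : ℝ := 4*((n:ℝ)+1)*(R+1) + D with hLdef
  have hL4 : (4:ℝ) ≤ L := by nlinarith
  have hL1 : (1:ℝ) ≤ L := by linarith
  have hL0 : (0:ℝ) < L := by linarith
  have hLD : D ≤ L := by nlinarith
  have hRL : R ≤ L := by nlinarith
  -- continuous cutoff function
  set f : (Fin n → ℝ) → ℝ := fun x => min 1 (δ⁻¹ * Metric.infDist x K) with hfdef
  have hfcont : Continuous f :=
    continuous_const.min (continuous_const.mul (Metric.continuous_infDist_pt K))
  have hf0 : ∀ x ∈ K, f x = 0 := by
    intro x hx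
    simp [hfdef, Metric.infDist_zero_of_mem hx]
  have hf1 : ∀ x, x ∉ Metric.thickening δ K → f x = 1 := by
    intro x hx
    have : δ ≤ Metric.infDist x K := by
      by_contra hcon
      push_neg at hcon
      exact hx ((Metric.mem_thickening_iff_infDist_lt hKne).mpr hcon)
    have h1 : (1:ℝ) ≤ δ⁻¹ * Metric.infDist x K := by
      rw [← inv_mul_cancel₀ (ne_of_gt hδpos)]
      exact mul_le_mul_of_nonneg_left this (inv_nonneg.mpr hδpos.le)
    simp [hfdef, min_eq_left h1]
  have hf01 : ∀ x, 0 ≤ f x := fun x =>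
    le_min zero_le_one (mul_nonneg (inv_nonneg.mpr hδpos.le) Metric.infDist_nonneg)
  have hfle1 : ∀ x, f x ≤ 1 := fun x => min_le_left _ _
  -- Stone-Weierstrass approximation on the closed ball of radius L
  obtain ⟨Qsw, hQsw⟩ := st14_sw (Metric.closedBall 0 L) (isCompact_closedBall _ _)
    f hfcont (1/16) (by norm_num)
  obtain ⟨Cg, hCg0, hCgrow⟩ := st14_growth Qsw
  set e : ℕ := max Qsw.totalDegree 1 with hedef
  have he1 : 1 ≤ e := le_max_right _ _
  obtain ⟨j, hj⟩ : ∃ j : ℕ, Cg + 3 < 4 ^ j := pow_unbounded_of_one_lt _ (by norm_num)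
  set m : ℕ := e + 1 + j with hmdef
  have hm2 : 2 ≤ m := by omega
  set Pen : MvPolynomial (Fin n) ℝ :=
    (MvPolynomial.C (1/D) * ∑ i : Fin n, (X i)^2)^m with hPendef
  have hPenEval : ∀ x : Fin n → ℝ, eval x Pen = ((1/D) * ∑ i, (x i)^2)^m := by
    intro x
    simp [hPendef]
  have hbase0 : ∀ x : Fin n → ℝ, 0 ≤ (1/D) * ∑ i, (x i)^2 := fun x =>
    mul_nonneg (by positivity) (Finset.sum_nonneg fun i _ => sq_nonneg _)
  have hPen0 : ∀ x : Fin n → ℝ, 0 ≤ eval x Pen := by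
    intro x; rw [hPenEval]; exact pow_nonneg (hbase0 x) m
  have hPenSmall : ∀ x : Fin n → ℝ, ‖x‖ ≤ R → eval x Pen ≤ 1/16 := by
    intro x hx
    rw [hPenEval]
    have hsum : ∑ i, (x i)^2 ≤ (n:ℝ) * R^2 := by
      calc ∑ i, (x i)^2 ≤ ∑ _i : Fin n, R^2 := by
            refine Finset.sum_le_sum fun i _ => ?_
            have := (norm_le_pi_norm x i).trans hx
            rw [Real.norm_eq_abs] at this
            nlinarith [abs_nonneg (x i), neg_abs_le (x i), le_abs_self (x i)]
        _ = (n:ℝ) * R^2 := by simp [mul_comm]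
    have hbase : (1/D) * ∑ i, (x i)^2 ≤ 1/4 := by
      rw [hDdef]
      rw [div_mul_eq_mul_div, div_le_div_iff₀ (by positivity) (by norm_num)]
      nlinarith
    calc ((1/D) * ∑ i, (x i)^2)^m ≤ (1/4:ℝ)^m := pow_le_pow_left₀ (hbase0 x) hbase m
      _ ≤ (1/4:ℝ)^2 := pow_le_pow_of_le_one (by norm_num) (by norm_num) hm2
      _ ≤ 1/16 := by norm_num
  have hQswBound : ∀ x : Fin n → ℝ, 1 ≤ ‖x‖ → |eval x Qsw| ≤ Cg * ‖x‖^e := by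
    intro x hx
    refine (hCgrow x).trans ?_
    rw [max_eq_right hx]
    exact mul_le_mul_of_nonneg_left
      (pow_le_pow_right₀ hx (le_max_left _ _)) hCg0
  have hPenBig : ∀ x : Fin n → ℝ, L ≤ ‖x‖ → Cg * ‖x‖^e + ‖x‖ + 2 ≤ eval x Pen := by
    intro x hx
    set t := ‖x‖ with htdef
    have ht1 : (1:ℝ) ≤ t := hL1.trans hx
    have htD : D ≤ t := hLD.trans hx
    have ht4 : (4:ℝ) ≤ t := hL4.trans hx
    have hu : t ≤ (1/D) * ∑ i, (x i)^2 := by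
      have h1 : t^2 ≤ ∑ i, (x i)^2 := by
        have := st14_sq_norm_le_sum x
        simpa [htdef] using this
      have h3 : (1/D) * t^2 ≤ (1/D) * ∑ i, (x i)^2 :=
        mul_le_mul_of_nonneg_left h1 (by positivity)
      have h2 : t ≤ (1/D) * t^2 := by
        rw [div_mul_eq_mul_div, le_div_iff₀ hD0]
        nlinarith
      linarith
    have hu4 : (4:ℝ) ≤ (1/D) * ∑ i, (x i)^2 := le_trans ht4 hu
    rw [hPenEval, hmdef]
    have hsplit : ((1/D) * ∑ i, (x i)^2)^(e+1+j)
        = ((1/D) * ∑ i, (x i)^2)^j * ((1/D) * ∑ i, (x i)^2)^(e+1) := by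
      rw [← pow_add]; ring_nf
    rw [hsplit]
    have h4j : (4:ℝ)^j ≤ ((1/D) * ∑ i, (x i)^2)^j :=
      pow_le_pow_left₀ (by norm_num) hu4 j
    have hte : t^(e+1) ≤ ((1/D) * ∑ i, (x i)^2)^(e+1) :=
      pow_le_pow_left₀ (by linarith) hu (e+1)
    have hmul : (Cg+3) * t^(e+1) ≤ ((1/D) * ∑ i, (x i)^2)^j * ((1/D) * ∑ i, (x i)^2)^(e+1) := by
      have hCgle : Cg + 3 ≤ (4:ℝ)^j := hj.le
      have h1 : (Cg+3) * t^(e+1) ≤ (4:ℝ)^j * t^(e+1) :=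
        mul_le_mul_of_nonneg_right hCgle (by positivity)
      refine h1.trans ?_
      exact mul_le_mul h4j hte (by positivity) (by positivity)
    refine le_trans ?_ hmul
    have hte' : t^e ≤ t^(e+1) := pow_le_pow_right₀ ht1 (by omega)
    have htle : t ≤ t^(e+1) := by
      calc t = t^1 := (pow_one t).symm
        _ ≤ t^(e+1) := pow_le_pow_right₀ ht1 (by omega)
    have h9 : Cg * t^e ≤ Cg * t^(e+1) := mul_le_mul_of_nonneg_left hte' hCg0
    have h10 : (1:ℝ) ≤ t^(e+1) := one_le_pow₀ ht1
    linarith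
  -- the unperturbed polynomial and the good linear shift
  set q₀ : (Fin n → ℝ) → ℝ := fun x => eval x (Qsw + Pen) with hq₀def
  have hq₀ : ContDiff ℝ (⊤ : ℕ∞) q₀ := st14_contDiff _
  have hrpos : 0 < min (1/((n:ℝ)+1)) (1/(16*((n:ℝ)+1)*(L+1))) := by positivity
  obtain ⟨a, ha_small, ha_reg⟩ := st14_good_shift hq₀ hrpos
  have ha0 : 0 ≤ ‖a‖ := norm_nonneg a
  have ha1 : (n:ℝ) * ‖a‖ ≤ 1 := by
    have h1 : ‖a‖ ≤ 1/((n:ℝ)+1) := (ha_small.trans_le (min_le_left _ _)).le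
    calc (n:ℝ) * ‖a‖ ≤ ((n:ℝ)+1) * (1/((n:ℝ)+1)) := by
          refine mul_le_mul (by linarith) h1 ha0 (by positivity)
      _ = 1 := by field_simp
  have ha2 : (n:ℝ) * ‖a‖ * L ≤ 1/16 := by
    have h1 : ‖a‖ ≤ 1/(16*((n:ℝ)+1)*(L+1)) := (ha_small.trans_le (min_le_right _ _)).le
    have h2 : (n:ℝ) * ‖a‖ * L ≤ ((n:ℝ)+1) * (1/(16*((n:ℝ)+1)*(L+1))) * (L+1) := by
      refine mul_le_mul ?_ (by linarith) (by linarith) (by positivity)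
      exact mul_le_mul (by linarith) h1 ha0 (by positivity)
    calc (n:ℝ) * ‖a‖ * L ≤ ((n:ℝ)+1) * (1/(16*((n:ℝ)+1)*(L+1))) * (L+1) := h2
      _ = 1/16 := by field_simp
  set Lin : MvPolynomial (Fin n) ℝ := ∑ i : Fin n, MvPolynomial.C (a i) * X i with hLindef
  set ℓ : (Fin n → ℝ) →L[ℝ] ℝ :=
    ∑ i : Fin n, a i • (ContinuousLinearMap.proj i : (Fin n → ℝ) →L[ℝ] ℝ) with hℓdef
  have hℓapp : ∀ x : Fin n → ℝ, ℓ x = ∑ i, a i * x i := by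
    intro x
    rw [hℓdef]
    simp [ContinuousLinearMap.sum_apply]
  have hLinEval : ∀ x : Fin n → ℝ, eval x Lin = ℓ x := by
    intro x
    rw [hℓapp, hLindef]
    simp
  have hℓsingle : ∀ i : Fin n, ℓ (Pi.single (M := fun _ => ℝ) i 1) = a i := by
    intro i
    rw [hℓapp]
    rw [Finset.sum_eq_single i]
    · simp
    · intro b _ hb
      simp [Pi.single_apply, hb.symm]
    · simp
  have hℓbound : ∀ x : Fin n → ℝ, |ℓ x| ≤ (n:ℝ) * ‖a‖ * ‖x‖ := by
    intro x
    rw [hℓapp]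
    calc |∑ i, a i * x i| ≤ ∑ i, |a i * x i| := Finset.abs_sum_le_sum_abs _ _
      _ ≤ ∑ _i : Fin n, ‖a‖ * ‖x‖ := by
          refine Finset.sum_le_sum fun i _ => ?_
          rw [abs_mul]
          exact mul_le_mul (norm_le_pi_norm a i) (norm_le_pi_norm x i)
            (abs_nonneg _) (norm_nonneg _)
      _ = (n:ℝ) * ‖a‖ * ‖x‖ := by simp [mul_assoc]
  set Qa : MvPolynomial (Fin n) ℝ := Qsw + Pen + Lin with hQadef
  set q : (Fin n → ℝ) → ℝ := fun x => eval x Qa with hqdef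
  have hq : ContDiff ℝ (⊤ : ℕ∞) q := st14_contDiff _
  have hqeq : ∀ x, q x = eval x Qsw + eval x Pen + ℓ x := by
    intro x
    rw [hqdef]
    simp only [hQadef, map_add]
    rw [hLinEval]
  have hq₀eq : ∀ x, q₀ x = eval x Qsw + eval x Pen := by
    intro x
    rw [hq₀def]
    simp only [map_add]
  -- Region estimates
  have hKq : ∀ x ∈ K, q x < 3/8 := by
    intro x hx
    have hxR : ‖x‖ < R := by simpa using (hUR (hKU hx))
    have hxL : x ∈ Metric.closedBall (0 : Fin n → ℝ) L := by
      simp only [Metric.mem_closedBall, dist_zero_right]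
      linarith
    have h1 : |eval x Qsw - f x| < 1/16 := hQsw x hxL
    have h2 : eval x Qsw < 1/16 := by
      rw [hf0 x hx] at h1
      have := abs_lt.mp h1
      linarith [this.2]
    have h3 : eval x Pen ≤ 1/16 := hPenSmall x hxR.le
    have h4 : |ℓ x| ≤ 1/16 := by
      refine (hℓbound x).trans ?_
      calc (n:ℝ) * ‖a‖ * ‖x‖ ≤ (n:ℝ) * ‖a‖ * L := by
            refine mul_le_mul_of_nonneg_left (by linarith) (by positivity)
        _ ≤ 1/16 := ha2
    have h5 := abs_lt.mp (lt_of_le_of_lt h4 (by norm_num : (1/16:ℝ) < 1/8))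
    rw [hqeq]
    linarith [h5.2]
  have hFar : ∀ x : Fin n → ℝ, L ≤ ‖x‖ → 2 ≤ q x := by
    intro x hx
    have ht1 : (1:ℝ) ≤ ‖x‖ := hL1.trans hx
    have h1 : |eval x Qsw| ≤ Cg * ‖x‖^e := hQswBound x ht1
    have h2 : Cg * ‖x‖^e + ‖x‖ + 2 ≤ eval x Pen := hPenBig x hx
    have h3 : |ℓ x| ≤ ‖x‖ := by
      refine (hℓbound x).trans ?_
      calc (n:ℝ) * ‖a‖ * ‖x‖ ≤ 1 * ‖x‖ := mul_le_mul_of_nonneg_right ha1 (norm_nonneg _)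
        _ = ‖x‖ := one_mul _
    have h4 := abs_le.mp h1
    have h5 := abs_le.mp h3
    rw [hqeq]
    linarith [h4.1, h5.1]
  have hOut : ∀ x : Fin n → ℝ, ‖x‖ ≤ L → x ∉ Metric.thickening δ K → 5/8 < q x := by
    intro x hxL hxt
    have hxB : x ∈ Metric.closedBall (0 : Fin n → ℝ) L := by
      simp only [Metric.mem_closedBall, dist_zero_right]; exact hxL
    have h1 : |eval x Qsw - f x| < 1/16 := hQsw x hxB
    have h2 : 15/16 < eval x Qsw := by
      rw [hf1 x hxt] at h1
      have := abs_lt.mp h1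
      linarith [this.1]
    have h3 : 0 ≤ eval x Pen := hPen0 x
    have h4 : |ℓ x| ≤ 1/16 := by
      refine (hℓbound x).trans ?_
      calc (n:ℝ) * ‖a‖ * ‖x‖ ≤ (n:ℝ) * ‖a‖ * L := by
            refine mul_le_mul_of_nonneg_left hxL (by positivity)
        _ ≤ 1/16 := ha2
    have h5 := abs_le.mp h4
    rw [hqeq]
    linarith [h5.1]
  have hsub58 : {x : Fin n → ℝ | q x ≤ 5/8} ⊆ Metric.thickening δ K := by
    intro x hx
    simp only [Set.mem_setOf_eq] at hx
    by_contra hxt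
    rcases le_or_gt ‖x‖ L with hc | hc
    · exact absurd hx (not_le.mpr (hOut x hc hxt))
    · linarith [hFar x hc.le]
  -- gradient of q versus gradient of q₀
  have hqsum : q = fun x => q₀ x + ℓ x := by
    funext x
    rw [hqeq, hq₀eq]
  have hgrad_eq : st14grad q = fun x => st14grad q₀ x + a := by
    funext x i
    have hfd : HasFDerivAt q (fderiv ℝ q₀ x + ℓ) x := by
      rw [hqsum]
      exact ((hq₀.differentiable (by simp) x).hasFDerivAt).add ℓ.hasFDerivAt
    show fderiv ℝ q x (Pi.single (M := fun _ => ℝ) i 1) = _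
    rw [hfd.fderiv]
    simp only [ContinuousLinearMap.add_apply, Pi.add_apply]
    rw [hℓsingle i]
    rfl
  have hgrad_fd : ∀ x, fderiv ℝ (st14grad q) x = fderiv ℝ (st14grad q₀) x := by
    intro x
    rw [hgrad_eq]
    exact fderiv_add_const a
  have hcrit : ∀ x, st14grad q x = 0 → (fderiv ℝ (st14grad q) x).det ≠ 0 := by
    intro x hx
    have h1 : st14grad q₀ x = -a := by
      have := congrFun (congrFun hgrad_eq x) -- not usable directly
      have h2 : st14grad q₀ x + a = 0 := by
        rw [hgrad_eq] at hx
        exact hx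
      funext i
      have := congrFun h2 i
      simp only [Pi.add_apply, Pi.zero_apply] at this
      simp only [Pi.neg_apply]
      linarith
    rw [hgrad_fd]
    exact ha_reg x h1
  -- finitely many critical values in the band
  set T : Set (Fin n → ℝ) := {x | st14grad q x = 0 ∧ q x ∈ Set.Icc (3/8:ℝ) (5/8)} with hTdef
  have hTq : Continuous q := hq.continuous
  have hTg : Continuous (st14grad q) := (st14grad_contDiff hq).continuous
  have hTclosed : IsClosed T := by
    have h1 : T = (st14grad q)⁻¹' {0} ∩ q⁻¹' (Set.Icc (3/8:ℝ) (5/8)) := by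
      ext x; simp [hTdef, Set.mem_preimage]
    rw [h1]
    exact (isClosed_singleton.preimage hTg).inter (isClosed_Icc.preimage hTq)
  have hTbdd : Bornology.IsBounded T := by
    refine (Metric.isBounded_ball (x := (0: Fin n → ℝ)) (r := R)).subset ?_
    intro x hx
    exact hUR (hthickU (hsub58 (by simpa [hTdef] using hx.2.2)))
  have hTcomp : IsCompact T := Metric.isCompact_of_isClosed_isBounded hTclosed hTbdd
  have hTfin : T.Finite := by
    refine st14_finite_of_isolated hTcomp fun x hx => ?_
    filter_upwards [st14_isolated (st14grad_contDiff hq) x (hcrit x hx.1)] with y hy hyT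
    exact hy (by rw [hyT.1, hx.1])
  have hVfin : (q '' T).Finite := hTfin.image q
  obtain ⟨c₁, hc₁⟩ :=
    ((Set.Ioo_infinite (by norm_num : (3/8:ℝ) < 1/2)).diff hVfin).nonempty
  obtain ⟨c₂, hc₂⟩ :=
    ((Set.Ioo_infinite (by norm_num : (1/2:ℝ) < 5/8)).diff hVfin).nonempty
  obtain ⟨⟨hc₁l, hc₁r⟩, hc₁V⟩ := hc₁
  obtain ⟨⟨hc₂l, hc₂r⟩, hc₂V⟩ := hc₂
  have hc12 : c₁ < c₂ := hc₁r.trans hc₂l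
  -- regular levels
  have hreg : ∀ c : ℝ, 3/8 < c → c < 5/8 → c ∉ q '' T →
      ∀ x, q x = c → fderiv ℝ q x ≠ 0 := by
    intro c hcl hcr hcV x hqx hfd
    have h1 : st14grad q x = 0 := (st14grad_eq_zero_iff q x).mpr hfd
    exact hcV ⟨x, ⟨h1, ⟨by linarith, by linarith⟩⟩, hqx⟩
  have hreg₁ := hreg c₁ hc₁l (by linarith) hc₁V
  have hreg₂ := hreg c₂ (by linarith) hc₂r hc₂V
  have hfr₁ : frontier {x : Fin n → ℝ | q x < c₁} = {x | q x = c₁} :=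
    st14_frontier_eq hq c₁ hreg₁
  have hfr₂ : frontier {x : Fin n → ℝ | q x < c₂} = {x | q x = c₂} :=
    st14_frontier_eq hq c₂ hreg₂
  -- the two open sets and polynomials
  set N₁ : Set (Fin n → ℝ) := {x | q x < c₁} with hN₁def
  set N₂ : Set (Fin n → ℝ) := {x | q x < c₂} with hN₂def
  have hopen₁ : IsOpen N₁ := isOpen_lt hTq continuous_const
  have hopen₂ : IsOpen N₂ := isOpen_lt hTq continuous_const
  have hKN₁ : K ⊆ N₁ := fun x hx => lt_trans (hKq x hx) hc₁l
  have hclN₁ : closure N₁ ⊆ {x | q x ≤ c₁} :=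
    closure_minimal (fun y (hy : q y < c₁) => le_of_lt hy) (isClosed_le hTq continuous_const)
  have hclN₂ : closure N₂ ⊆ {x | q x ≤ c₂} :=
    closure_minimal (fun y (hy : q y < c₂) => le_of_lt hy) (isClosed_le hTq continuous_const)
  have hN₁N₂ : closure N₁ ⊆ N₂ := fun x hx => lt_of_le_of_lt (hclN₁ hx) hc12
  have hN₂U : closure N₂ ⊆ U := by
    intro x hx
    refine hthickU (hsub58 ?_)
    have := hclN₂ hx
    simp only [Set.mem_setOf_eq] at this ⊢
    linarith
  set P₁ : MvPolynomial (Fin n) ℝ := Qa - MvPolynomial.C c₁ with hP₁def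
  set P₂ : MvPolynomial (Fin n) ℝ := Qa - MvPolynomial.C c₂ with hP₂def
  have hevalP₁ : (fun y : Fin n → ℝ => eval y P₁) = fun y => q y - c₁ := by
    funext y
    rw [hP₁def, map_sub, eval_C]
  have hevalP₂ : (fun y : Fin n → ℝ => eval y P₂) = fun y => q y - c₂ := by
    funext y
    rw [hP₂def, map_sub, eval_C]
  have hZ₁ : {x : Fin n → ℝ | eval x P₁ = 0} = {x | q x = c₁} := by
    ext x
    rw [Set.mem_setOf_eq, Set.mem_setOf_eq, show eval x P₁ = q x - c₁ from congrFun hevalP₁ x,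
      sub_eq_zero]
  have hZ₂ : {x : Fin n → ℝ | eval x P₂ = 0} = {x | q x = c₂} := by
    ext x
    rw [Set.mem_setOf_eq, Set.mem_setOf_eq, show eval x P₂ = q x - c₂ from congrFun hevalP₂ x,
      sub_eq_zero]
  have hgradP₁ : ∀ x ∈ {x : Fin n → ℝ | eval x P₁ = 0},
      fderiv ℝ (fun y => eval y P₁) x ≠ 0 := by
    intro x hx
    rw [hevalP₁]
    rw [hZ₁] at hx
    have : fderiv ℝ (fun y => q y - c₁) x = fderiv ℝ q x := fderiv_sub_const c₁
    rw [this]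
    exact hreg₁ x hx
  have hgradP₂ : ∀ x ∈ {x : Fin n → ℝ | eval x P₂ = 0},
      fderiv ℝ (fun y => eval y P₂) x ≠ 0 := by
    intro x hx
    rw [hevalP₂]
    rw [hZ₂] at hx
    have : fderiv ℝ (fun y => q y - c₂) x = fderiv ℝ q x := fderiv_sub_const c₂
    rw [this]
    exact hreg₂ x hx
  have hfrN₁ : frontier N₁ = {x : Fin n → ℝ | eval x P₁ = 0} := by rw [hZ₁, hN₁def, hfr₁]
  have hfrN₂ : frontier N₂ = {x : Fin n → ℝ | eval x P₂ = 0} := by rw [hZ₂, hN₂def, hfr₂]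
  -- the smooth cut-off β
  set c₁' : ℝ := c₁ + (c₂ - c₁)/3 with hc₁'def
  set c₂' : ℝ := c₂ - (c₂ - c₁)/3 with hc₂'def
  have hc₁c₁' : c₁ < c₁' := by rw [hc₁'def]; linarith
  have hc₂'c₂ : c₂' < c₂ := by rw [hc₂'def]; linarith
  have hdenom : 0 < c₂' - c₁' := by rw [hc₁'def, hc₂'def]; linarith
  set β : (Fin n → ℝ) → ℝ :=
    fun x => Real.smoothTransition ((c₂' - q x)/(c₂' - c₁')) with hβdef
  have hβsmooth : ContDiff ℝ (k : ℕ∞) β := by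
    have harg : ContDiff ℝ (↑(⊤:ℕ∞)) (fun x : Fin n → ℝ => (c₂' - q x)/(c₂' - c₁')) :=
      ((contDiff_const.sub hq).div_const _).of_le (mod_cast le_top)
    have hb : ContDiff ℝ (↑(⊤:ℕ∞)) β := (Real.smoothTransition.contDiff).comp harg
    exact hb.of_le (by exact_mod_cast le_top)
  have hβIcc : ∀ x, β x ∈ Set.Icc (0:ℝ) 1 := fun x =>
    ⟨Real.smoothTransition.nonneg _, Real.smoothTransition.le_one _⟩
  have hβone : ∀ y : Fin n → ℝ, q y ≤ c₁' → β y = 1 := by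
    intro y hy
    apply Real.smoothTransition.one_of_one_le
    rw [le_div_iff₀ hdenom, one_mul]
    linarith
  have hβzero : ∀ y : Fin n → ℝ, c₂' ≤ q y → β y = 0 := by
    intro y hy
    apply Real.smoothTransition.zero_of_nonpos
    apply div_nonpos_of_nonpos_of_nonneg
    · linarith
    · linarith
  refine ⟨N₁, N₂, P₁, P₂, β, hopen₁, hopen₂, hKN₁, hN₁N₂, hN₂U, hβsmooth, hβIcc, ?_, ?_, ?_, ?_⟩
  · intro i
    rcases eq_or_ne i 0 with hi | hi
    · simp only [hi, eq_self_iff_true, if_true]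
      refine ⟨?_, ?_, ?_⟩
      · rw [hfrN₁]
      · intro x _
        rw [hfrN₁]
        exact connectedComponentIn_subset _ _
      · exact hgradP₁
    · simp only [if_neg hi]
      refine ⟨?_, ?_, ?_⟩
      · rw [hfrN₂]
      · intro x _
        rw [hfrN₂]
        exact connectedComponentIn_subset _ _
      · exact hgradP₂
  · intro x hx
    apply hβzero
    have : ¬ (q x < c₂) := hx
    linarith [not_lt.mp this, hc₂'c₂]
  · intro x hx
    apply hβone
    have := hclN₁ hx
    simp only [Set.mem_setOf_eq] at this
    linarith
  · intro x hx i hi1 _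
    rcases hx with hx | hx
    · have hq1 : q x = c₁ := by
        rw [hN₁def, hfr₁] at hx
        exact hx
      refine st14_iteratedFDeriv_zero (O := {y : Fin n → ℝ | q y < c₁'})
        (isOpen_lt hTq continuous_const) ?_ (fun y hy => hβone y (le_of_lt hy)) hi1
      simp only [Set.mem_setOf_eq]
      rw [hq1]
      exact hc₁c₁'
    · have hq2 : q x = c₂ := by
        rw [hN₂def, hfr₂] at hx
        exact hx
      refine st14_iteratedFDeriv_zero (O := {y : Fin n → ℝ | c₂' < q y})
        (isOpen_lt continuous_const hTq) ?_ (fun y hy => hβzero y (le_of_lt hy)) hi1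
      simp only [Set.mem_setOf_eq]
      rw [hq2]
      exact hc₂'c₂
end
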